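/- arXiv:math/0602061 — 3 statements merged into one kernel-verified Lean document; each statement's English description precedes it below -/
import Mathlib

section
/- For every weighted digraph: for every k ∈ {1,…,n−v}, the normalized matrices of out forests satisfy J̄_k·J̄ = J̄·J̄_k = J̄ (in particular J̄² = J̄), and for every τ > 0, Q(τ)·J̄ = J̄·Q(τ) = J̄. -/
open Matrix BigOperators Filter

/-- An out forest of the weighted digraph with arc-weight matrix `ε`:
a set of arcs (pairs with positive weight), every vertex has at most one
incoming arc, and there is no directed cycle. -/
def IsOutForest {n : ℕ} (ε : Fin n → Fin n → ℝ) (F : Finset (Fin n × Fin n)) : Prop :=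
  (∀ p ∈ F, 0 < ε p.1 p.2) ∧
  (∀ u u' v : Fin n, (u, v) ∈ F → (u', v) ∈ F → u = u') ∧
  ¬ ∃ (k : ℕ) (f : ℕ → Fin n), 0 < k ∧ f 0 = f k ∧ ∀ i < k, (f i, f (i + 1)) ∈ F

/-- The weight of a forest: the product of the weights of its arcs. -/
noncomputable def forestWeight {n : ℕ} (ε : Fin n → Fin n → ℝ)
    (F : Finset (Fin n × Fin n)) : ℝ :=
  ∏ p ∈ F, ε p.1 p.2

/-- `σ_k`: the total weight of the out forests with exactly `k` arcs. -/
noncomputable def sigmaW {n : ℕ} (ε : Fin n → Fin n → ℝ) (k : ℕ) : ℝ :=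
  ∑ᶠ F ∈ {F : Finset (Fin n × Fin n) | IsOutForest ε F ∧ F.card = k}, forestWeight ε F

/-- `Q_k`: the matrix whose `(i,j)` entry is the total weight of out forests with `k`
arcs in which `j` has no incoming arc and `i` is reachable from `j` along arcs of `F`. -/
noncomputable def QMat {n : ℕ} (ε : Fin n → Fin n → ℝ) (k : ℕ) :
    Matrix (Fin n) (Fin n) ℝ :=
  Matrix.of fun i j =>
    ∑ᶠ F ∈ {F : Finset (Fin n × Fin n) | IsOutForest ε F ∧ F.card = k ∧
        (∀ u, (u, j) ∉ F) ∧ Relation.ReflTransGen (fun a b => (a, b) ∈ F) j i},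
      forestWeight ε F

/-- `n − v`: the maximum number of arcs in an out forest. -/
noncomputable def maxForestCard {n : ℕ} (ε : Fin n → Fin n → ℝ) : ℕ :=
  sSup {k | ∃ F : Finset (Fin n × Fin n), IsOutForest ε F ∧ F.card = k}

/-- The Kirchhoff matrix: `l i j = -ε j i` for `j ≠ i`, `l i i = Σ_{k ≠ i} ε k i`. -/
noncomputable def kirchhoff {n : ℕ} (ε : Fin n → Fin n → ℝ) : Matrix (Fin n) (Fin n) ℝ :=
  Matrix.of fun i j =>
    if i = j then ∑ k ∈ Finset.univ.filter (· ≠ i), ε k i else -(ε j i)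

/-- The normalized matrix of maximum out forests `J̄ = σ_{n−v}⁻¹ Q_{n−v}`. -/
noncomputable def Jbar {n : ℕ} (ε : Fin n → Fin n → ℝ) : Matrix (Fin n) (Fin n) ℝ :=
  (sigmaW ε (maxForestCard ε))⁻¹ • QMat ε (maxForestCard ε)



namespace FP

variable {n : ℕ}

abbrev Arcs (n : ℕ) := Finset (Fin n × Fin n)

def reach (F : Arcs n) (a b : Fin n) : Prop :=
  Relation.ReflTransGen (fun x y => (x, y) ∈ F) a b

lemma reach_refl (F : Arcs n) (a : Fin n) : reach F a a := Relation.ReflTransGen.refl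

lemma reach_mono {F F' : Arcs n} (h : F ⊆ F') {a b : Fin n} (hr : reach F a b) :
    reach F' a b :=
  by
    unfold reach at hr ⊢
    induction hr with
    | refl => exact Relation.ReflTransGen.refl
    | tail _ hcd ih => exact Relation.ReflTransGen.tail ih (h hcd)

variable {ε : Fin n → Fin n → ℝ}

lemma forest_subset {F F' : Arcs n} (hF : IsOutForest ε F) (h : F' ⊆ F) :
    IsOutForest ε F' := by
  obtain ⟨h1, h2, h3⟩ := hF
  refine ⟨fun p hp => h1 p (h hp), fun u u' v hu hu' => h2 u u' v (h hu) (h hu'), ?_⟩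
  rintro ⟨k, f, hk, hf, harc⟩
  exact h3 ⟨k, f, hk, hf, fun i hi => h (harc i hi)⟩

lemma reach_exists_fn {F : Arcs n} {b a : Fin n} (h : reach F b a) :
    ∃ (m : ℕ) (f : ℕ → Fin n), f 0 = b ∧ f m = a ∧ ∀ t < m, (f t, f (t + 1)) ∈ F := by
  induction h with
  | refl => exact ⟨0, fun _ => b, rfl, rfl, by omega⟩
  | @tail c d hbc hcd ih =>
    obtain ⟨m, f, hf0, hfm, harc⟩ := ih
    refine ⟨m + 1, fun t => if t ≤ m then f t else d, by simp [hf0], by simp, ?_⟩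
    intro t ht
    rcases Nat.lt_or_ge t m with h' | h'
    · simp only [if_pos (le_of_lt h'), if_pos (by omega : t + 1 ≤ m)]
      exact harc t h'
    · have e : t = m := by omega
      rw [e]
      simp only [if_pos (le_refl m), if_neg (by omega : ¬ m + 1 ≤ m), hfm]
      exact hcd

/-- in a forest there is no arc `(a,b)` with `b` reaching back to `a`. -/
lemma forest_no_back (hF : IsOutForest ε F) {a b : Fin n} (hab : (a, b) ∈ F)
    (hr : reach F b a) : False := by
  obtain ⟨m, f, hf0, hfm, harc⟩ := reach_exists_fn hr
  refine hF.2.2 ⟨m + 1, fun t => if t = 0 then a else f (t - 1), by omega, ?_, ?_⟩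
  · simp [hfm]
  · intro t ht
    rcases Nat.eq_zero_or_pos t with h' | h'
    · subst h'; simpa [hf0] using hab
    · have h1 : ¬ (t = 0) := by omega
      have h2 : ¬ (t + 1 = 0) := by omega
      simp only [if_neg h1, if_neg h2]
      have : t - 1 < m := by omega
      have := harc (t - 1) this
      have ht' : t - 1 + 1 = t := by omega
      rwa [ht'] at this

/-- converse: acyclicity follows from no back-reach. -/
lemma no_cycle_of_no_back {F : Arcs n}
    (h : ∀ a b : Fin n, (a, b) ∈ F → ¬ reach F b a) :
    ¬ ∃ (k : ℕ) (f : ℕ → Fin n), 0 < k ∧ f 0 = f k ∧ ∀ i < k, (f i, f (i + 1)) ∈ F := by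
  rintro ⟨k, f, hk, hf, harc⟩
  have key : ∀ t, 1 ≤ t → t ≤ k → reach F (f 1) (f t) := by
    intro t
    induction t with
    | zero => omega
    | succ s ih =>
      intro h1 h2
      rcases Nat.eq_zero_or_pos s with h' | h'
      · subst h'; exact reach_refl F (f 1)
      · exact Relation.ReflTransGen.tail (ih h' (by omega)) (harc s (by omega))
  have h1 : (f 0, f 1) ∈ F := harc 0 hk
  exact h (f 0) (f 1) h1 (hf ▸ key k hk le_rfl)

end FP

namespace FP
variable {n : ℕ} {ε : Fin n → Fin n → ℝ} {F G : Arcs n}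

/-- no incoming arc -/
def isRoot (F : Arcs n) (j : Fin n) : Prop := ∀ u, (u, j) ∉ F

lemma isRoot_subset {F F' : Arcs n} (h : F' ⊆ F) (hr : isRoot F j) : isRoot F' j :=
  fun u hu => hr u (h hu)

lemma reach_root_eq (hj : isRoot F j) {x : Fin n} (hx : reach F x j) : x = j := by
  rcases Relation.ReflTransGen.cases_tail hx with h | ⟨c, _, hc⟩
  · exact h.symm ▸ rfl
  · exact absurd hc (hj c)

lemma reach_tail_exists (h : reach F a b) (hab : a ≠ b) :
    ∃ c, reach F a c ∧ (c, b) ∈ F := by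
  rcases Relation.ReflTransGen.cases_tail h with h' | ⟨c, hc1, hc2⟩
  · exact absurd h'.symm hab
  · exact ⟨c, hc1, hc2⟩

/-- in a forest, the ancestors of a vertex are totally ordered -/
lemma reach_total (hF : IsOutForest ε F) {a b c : Fin n}
    (ha : reach F a c) (hb : reach F b c) : reach F a b ∨ reach F b a := by
  induction ha with
  | refl => exact Or.inr hb
  | @tail d e had hde ih =>
    rcases Relation.ReflTransGen.cases_tail hb with h' | ⟨c', hc1, hc2⟩
    · subst h'; exact Or.inl (Relation.ReflTransGen.tail had hde)
    · have : c' = d := hF.2.1 c' d e hc2 hde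
      subst this
      exact ih hc1

lemma root_unique (hF : IsOutForest ε F) {j j' i : Fin n}
    (hj : isRoot F j) (hj' : isRoot F j') (h1 : reach F j i) (h2 : reach F j' i) :
    j = j' := by
  rcases reach_total hF h1 h2 with h | h
  · exact (reach_root_eq hj' h).symm ▸ rfl
  · exact (reach_root_eq hj h).symm

/-- existence of a root reaching any vertex -/
lemma exists_root (hF : IsOutForest ε F) (x : Fin n) :
    ∃ r, isRoot F r ∧ reach F r x := by
  classical
  have main : ∀ (N : ℕ) (x : Fin n),
      (Finset.univ.filter (fun y => reach F y x)).card ≤ N →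
      ∃ r, isRoot F r ∧ reach F r x := by
    intro N
    induction N with
    | zero =>
      intro x hx
      have : x ∈ Finset.univ.filter (fun y => reach F y x) := by
        simp [reach_refl]
      have := Finset.card_pos.mpr ⟨x, this⟩
      omega
    | succ N ih =>
      intro x hx
      by_cases hroot : isRoot F x
      · exact ⟨x, hroot, reach_refl F x⟩
      · rw [isRoot] at hroot; push_neg at hroot
        obtain ⟨p, hp⟩ := hroot
        have hsub : Finset.univ.filter (fun y => reach F y p) ⊆
            Finset.univ.filter (fun y => reach F y x) := by
          intro y hy
          simp only [Finset.mem_filter, Finset.mem_univ, true_and] at hy ⊢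
          exact Relation.ReflTransGen.tail hy hp
        have hxin : x ∈ Finset.univ.filter (fun y => reach F y x) := by
          simp [reach_refl]
        have hxout : x ∉ Finset.univ.filter (fun y => reach F y p) := by
          simp only [Finset.mem_filter, Finset.mem_univ, true_and]
          intro hr
          exact forest_no_back hF hp hr
        have hlt : (Finset.univ.filter (fun y => reach F y p)).card <
            (Finset.univ.filter (fun y => reach F y x)).card :=
          Finset.card_lt_card ⟨hsub, fun hss => hxout (hss hxin)⟩
        obtain ⟨r, hr1, hr2⟩ := ih p (by omega)
        exact ⟨r, hr1, Relation.ReflTransGen.tail hr2 hp⟩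
  exact main _ x le_rfl

/-- the (unique) in-neighbour of `i`, if any -/
noncomputable def par (G : Arcs n) (i : Fin n) : Fin n :=
  if h : ∃ u, (u, i) ∈ G then h.choose else i

lemma par_spec {G : Arcs n} {i : Fin n} (h : ∃ u, (u, i) ∈ G) : (par G i, i) ∈ G := by
  rw [par, dif_pos h]; exact h.choose_spec

lemma par_eq (hF : IsOutForest ε G) {u i : Fin n} (h : (u, i) ∈ G) : par G i = u :=
  hF.2.1 _ _ _ (par_spec ⟨u, h⟩) h

end FP

namespace FP
variable {n : ℕ} {ε : Fin n → Fin n → ℝ} {F G : Arcs n} {u i a b : Fin n}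

lemma reach_insert_cases (h : reach (insert (u, i) F) a b) :
    reach F a b ∨ (reach F a u ∧ reach F i b) := by
  induction h with
  | refl => exact Or.inl (reach_refl F a)
  | @tail c d hac hcd ih =>
    rcases Finset.mem_insert.mp hcd with h' | h'
    · rw [Prod.mk.injEq] at h'
      obtain ⟨rfl, rfl⟩ := h'
      rcases ih with h'' | ⟨h1, _⟩
      · exact Or.inr ⟨h'', reach_refl F d⟩
      · exact Or.inr ⟨h1, reach_refl F d⟩
    · rcases ih with h'' | ⟨h1, h2⟩
      · exact Or.inl (Relation.ReflTransGen.tail h'' h')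
      · exact Or.inr ⟨h1, Relation.ReflTransGen.tail h2 h'⟩

lemma reach_erase (h : reach G a b) (hib : ¬ reach G i b) :
    reach (G.erase (u, i)) a b := by
  induction h with
  | refl => exact reach_refl _ a
  | @tail c d hac hcd ih =>
    have hdi : d ≠ i := by rintro rfl; exact hib Relation.ReflTransGen.refl
    have h1 : (c, d) ∈ G.erase (u, i) := by
      refine Finset.mem_erase.mpr ⟨?_, hcd⟩
      simp only [ne_eq, Prod.mk.injEq, not_and]
      intro _ h'; exact hdi h'
    have h2 : ¬ reach G i c := fun hr => hib (Relation.ReflTransGen.tail hr hcd)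
    exact Relation.ReflTransGen.tail (ih h2) h1

lemma insert_forest (hF : IsOutForest ε F) (hroot : isRoot F i)
    (hpos : 0 < ε u i) (hcyc : ¬ reach F i u) :
    IsOutForest ε (insert (u, i) F) := by
  refine ⟨?_, ?_, ?_⟩
  · intro p hp
    rcases Finset.mem_insert.mp hp with h' | h'
    · subst h'; exact hpos
    · exact hF.1 p h'
  · intro a a' v ha ha'
    rcases Finset.mem_insert.mp ha with h1 | h1 <;>
      rcases Finset.mem_insert.mp ha' with h2 | h2
    · rw [Prod.mk.injEq] at h1 h2
      rw [h1.1, h2.1]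
    · rw [Prod.mk.injEq] at h1
      exact absurd (h1.2 ▸ h2) (hroot a')
    · rw [Prod.mk.injEq] at h2
      exact absurd (h2.2 ▸ h1) (hroot a)
    · exact hF.2.1 a a' v h1 h2
  · apply no_cycle_of_no_back
    intro a b hab hr
    rcases Finset.mem_insert.mp hab with h' | h'
    · rw [Prod.mk.injEq] at h'
      obtain ⟨rfl, rfl⟩ := h'
      rcases reach_insert_cases hr with h'' | ⟨h1, _⟩
      · exact hcyc h''
      · exact hcyc h1
    · rcases reach_insert_cases hr with h'' | ⟨h1, h2⟩
      · exact forest_no_back hF h' h''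
      · exact hcyc (Relation.ReflTransGen.trans (Relation.ReflTransGen.tail h2 h') h1)

lemma forestWeight_insert (hmem : (u, i) ∉ F) :
    forestWeight ε (insert (u, i) F) = ε u i * forestWeight ε F := by
  rw [forestWeight, forestWeight, Finset.prod_insert hmem]

lemma forestWeight_erase (hmem : (u, i) ∈ G) :
    forestWeight ε G = ε u i * forestWeight ε (G.erase (u, i)) := by
  have := Finset.mul_prod_erase G (fun p => ε p.1 p.2) hmem
  simpa [forestWeight] using this.symm

lemma forestWeight_pos (hF : IsOutForest ε F) : 0 < forestWeight ε F :=
  Finset.prod_pos (fun p hp => hF.1 p hp)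

lemma isRoot_erase_self (hF : IsOutForest ε G) (hmem : (u, i) ∈ G) :
    isRoot (G.erase (u, i)) i := by
  intro w hw
  have h1 := Finset.mem_erase.mp hw
  exact h1.1 (by rw [hF.2.1 w u i h1.2 hmem])

lemma isRoot_insert {j : Fin n} (hji : j ≠ i) (hroot : isRoot F j) :
    isRoot (insert (u, i) F) j := by
  intro w hw
  rcases Finset.mem_insert.mp hw with h' | h'
  · rw [Prod.mk.injEq] at h'
    exact hji h'.2
  · exact hroot w h'

end FP

namespace FP
variable {n : ℕ} {ε : Fin n → Fin n → ℝ} {F G : Arcs n}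

noncomputable def setF {α : Type*} [Fintype α] (S : Set α) : Finset α :=
  (Set.toFinite S).toFinset

lemma mem_setF {α : Type*} [Fintype α] {S : Set α} {x : α} : x ∈ setF S ↔ x ∈ S :=
  Set.Finite.mem_toFinset _

lemma finsum_mem_eq_sum_setF {α : Type*} [Fintype α] (S : Set α) (f : α → ℝ) :
    ∑ᶠ x ∈ S, f x = ∑ x ∈ setF S, f x := by
  rw [← finsum_mem_coe_finset]
  unfold setF
  rw [Set.Finite.coe_toFinset]

lemma sigmaW_eq (k : ℕ) :
    sigmaW ε k = ∑ F ∈ setF {F : Arcs n | IsOutForest ε F ∧ F.card = k},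
      forestWeight ε F :=
  finsum_mem_eq_sum_setF _ _

lemma QMat_eq (k : ℕ) (i j : Fin n) :
    QMat ε k i j = ∑ F ∈ setF {F : Arcs n | IsOutForest ε F ∧ F.card = k ∧
      isRoot F j ∧ reach F j i}, forestWeight ε F :=
  finsum_mem_eq_sum_setF _ _

lemma empty_forest : IsOutForest ε (∅ : Arcs n) := by
  refine ⟨by simp, by simp, ?_⟩
  rintro ⟨k, f, hk, hf, harc⟩
  have := harc 0 hk
  simp at this

lemma bddAbove_cards :
    BddAbove {k | ∃ F : Arcs n, IsOutForest ε F ∧ F.card = k} := by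
  refine ⟨Fintype.card (Fin n × Fin n), ?_⟩
  rintro k ⟨F, _, rfl⟩
  exact Finset.card_le_univ F

lemma forest_card_le (hF : IsOutForest ε F) : F.card ≤ maxForestCard ε :=
  le_csSup bddAbove_cards ⟨F, hF, rfl⟩

lemma exists_max_forest (ε : Fin n → Fin n → ℝ) :
    ∃ F : Arcs n, IsOutForest ε F ∧ F.card = maxForestCard ε :=
 by
  have h : (0 : ℕ) ∈ {k | ∃ F : Arcs n, IsOutForest ε F ∧ F.card = k} :=
    ⟨∅, empty_forest, rfl⟩
  exact Nat.sSup_mem ⟨0, h⟩ bddAbove_cards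

lemma card_eq_zero_forest (hF : IsOutForest ε F) (h : F.card = 0) : F = ∅ :=
  Finset.card_eq_zero.mp h

lemma sigmaW_zero : sigmaW ε (0 : ℕ) = (1 : ℝ) := by
  rw [sigmaW_eq]
  have : setF {F : Arcs n | IsOutForest ε F ∧ F.card = 0} = {(∅ : Arcs n)} := by
    ext F
    simp only [mem_setF, Set.mem_setOf_eq, Finset.mem_singleton]
    constructor
    · rintro ⟨hF, h0⟩; exact Finset.card_eq_zero.mp h0
    · rintro rfl; exact ⟨empty_forest, rfl⟩
  rw [this, Finset.sum_singleton, forestWeight, Finset.prod_empty]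

lemma QMat_zero : QMat ε (0 : ℕ) = (1 : Matrix (Fin n) (Fin n) ℝ) := by
  ext i j
  rw [QMat_eq]
  by_cases hij : i = j
  · subst hij
    have : setF {F : Arcs n | IsOutForest ε F ∧ F.card = 0 ∧ isRoot F i ∧ reach F i i}
        = {(∅ : Arcs n)} := by
      ext F
      simp only [mem_setF, Set.mem_setOf_eq, Finset.mem_singleton]
      constructor
      · rintro ⟨hF, h0, _⟩; exact Finset.card_eq_zero.mp h0
      · rintro rfl
        exact ⟨empty_forest, rfl, by simp [isRoot], reach_refl _ _⟩
    rw [this, Finset.sum_singleton, forestWeight, Finset.prod_empty]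
    simp [Matrix.one_apply]
  · have : setF {F : Arcs n | IsOutForest ε F ∧ F.card = 0 ∧ isRoot F j ∧ reach F j i}
        = (∅ : Finset (Arcs n)) := by
      ext F
      simp only [mem_setF, Set.mem_setOf_eq, Finset.notMem_empty, iff_false, not_and]
      intro hF h0 hroot hreach
      obtain rfl := Finset.card_eq_zero.mp h0
      rcases Relation.ReflTransGen.cases_tail hreach with h' | ⟨c, _, hc⟩
      · exact hij h'
      · exact absurd hc (by simp)
    rw [this, Finset.sum_empty]
    simp [Matrix.one_apply, hij]

lemma sigmaW_zero_of_gt {k : ℕ} (hk : maxForestCard ε < k) : sigmaW ε k = (0 : ℝ) := by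
  rw [sigmaW_eq]
  convert Finset.sum_empty
  ext F
  simp only [mem_setF, Set.mem_setOf_eq, Finset.notMem_empty, iff_false, not_and]
  intro hF hcard
  have := forest_card_le hF
  omega

lemma QMat_zero_of_gt {k : ℕ} (hk : maxForestCard ε < k) :
    QMat ε k = (0 : Matrix (Fin n) (Fin n) ℝ) := by
  ext i j
  rw [QMat_eq]
  convert Finset.sum_empty
  ext F
  simp only [mem_setF, Set.mem_setOf_eq, Finset.notMem_empty, iff_false, not_and]
  intro hF hcard
  have := forest_card_le hF
  omega
  rfl

lemma sigmaW_nonneg (k : ℕ) : (0 : ℝ) ≤ sigmaW ε k := by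
  rw [sigmaW_eq]
  refine Finset.sum_nonneg fun F hF => ?_
  exact le_of_lt (forestWeight_pos (mem_setF.mp hF).1)

lemma sigmaW_pos {k : ℕ} (hk : k ≤ maxForestCard ε) : (0 : ℝ) < sigmaW ε k := by
  obtain ⟨G, hG, hGcard⟩ := exists_max_forest ε
  obtain ⟨F, hFG, hFcard⟩ := Finset.exists_subset_card_eq (by omega : k ≤ G.card)
  rw [sigmaW_eq]
  refine Finset.sum_pos' (fun F hF => le_of_lt (forestWeight_pos (mem_setF.mp hF).1)) ?_
  exact ⟨F, mem_setF.mpr ⟨forest_subset hG hFG, hFcard⟩,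
    forestWeight_pos (forest_subset hG hFG)⟩

end FP

namespace FP
variable {n : ℕ} {ε : Fin n → Fin n → ℝ} {F G : Arcs n} {u i j : Fin n}

lemma setF_congr {α : Type*} [Fintype α] {S T : Set α} (h : ∀ x, x ∈ S ↔ x ∈ T) :
    setF S = setF T := by
  ext x; simp only [mem_setF]; exact h x

lemma sum_setF_split {α : Type*} [Fintype α] (C q : α → Prop) (f : α → ℝ) :
    ∑ x ∈ setF {x | C x}, f x =
      ∑ x ∈ setF {x | C x ∧ q x}, f x + ∑ x ∈ setF {x | C x ∧ ¬ q x}, f x := by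
  classical
  have h1 : setF {x | C x ∧ q x} = (setF {x | C x}).filter q := by
    ext x; simp [mem_setF]
  have h2 : setF {x | C x ∧ ¬ q x} = (setF {x | C x}).filter (fun x => ¬ q x) := by
    ext x; simp [mem_setF]
  rw [h1, h2, Finset.sum_filter_add_sum_filter_not]

lemma sum_setF_pair (P : Fin n → Arcs n → Prop) (g : Fin n → Arcs n → ℝ) :
    ∑ u : Fin n, ∑ F ∈ setF {F : Arcs n | P u F}, g u F
      = ∑ x ∈ setF {x : Fin n × Arcs n | P x.1 x.2}, g x.1 x.2 := by
  classical
  have h1 : ∀ u : Fin n, setF {F : Arcs n | P u F}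
      = Finset.univ.filter (fun F => P u F) := by
    intro u; ext F; simp [mem_setF]
  have h2 : setF {x : Fin n × Arcs n | P x.1 x.2}
      = Finset.univ.filter (fun x : Fin n × Arcs n => P x.1 x.2) := by
    ext x; simp [mem_setF]
  simp only [h1, h2, Finset.sum_filter]
  exact (Fintype.sum_prod_type
    (fun x : Fin n × Arcs n => if P x.1 x.2 then g x.1 x.2 else 0)).symm

/-- the conditioned pair sum -/
noncomputable def PS (ε : Fin n → Fin n → ℝ) (i j : Fin n) (t : ℕ)
    (p : Fin n → Arcs n → Prop) : ℝ :=
  ∑ x ∈ setF {x : Fin n × Arcs n |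
      (IsOutForest ε x.2 ∧ x.2.card = t ∧ isRoot x.2 j) ∧
        0 < ε x.1 i ∧ p x.1 x.2},
    ε x.1 i * forestWeight ε x.2

lemma PS_split (t : ℕ) (p q : Fin n → Arcs n → Prop) :
    PS ε i j t p = PS ε i j t (fun u F => p u F ∧ q u F)
      + PS ε i j t (fun u F => p u F ∧ ¬ q u F) := by
  rw [PS, PS, PS]
  rw [sum_setF_split
    (fun x : Fin n × Arcs n => (IsOutForest ε x.2 ∧ x.2.card = t ∧ isRoot x.2 j) ∧
      0 < ε x.1 i ∧ p x.1 x.2) (fun x => q x.1 x.2)]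
  congr 1
  · apply Finset.sum_congr _ (fun _ _ => rfl)
    apply setF_congr; intro x
    simp only [Set.mem_setOf_eq]; tauto
  · apply Finset.sum_congr _ (fun _ _ => rfl)
    apply setF_congr; intro x
    simp only [Set.mem_setOf_eq]; tauto

lemma PS_congr (t : ℕ) {p q : Fin n → Arcs n → Prop}
    (h : ∀ u F, IsOutForest ε F → F.card = t → isRoot F j → 0 < ε u i →
      (p u F ↔ q u F)) :
    PS ε i j t p = PS ε i j t q := by
  rw [PS, PS]
  apply Finset.sum_congr _ (fun _ _ => rfl)
  apply setF_congr
  rintro ⟨u, F⟩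
  simp only [Set.mem_setOf_eq]
  constructor
  · rintro ⟨⟨h1, h2, h3⟩, h4, h5⟩
    exact ⟨⟨h1, h2, h3⟩, h4, (h u F h1 h2 h3 h4).mp h5⟩
  · rintro ⟨⟨h1, h2, h3⟩, h4, h5⟩
    exact ⟨⟨h1, h2, h3⟩, h4, (h u F h1 h2 h3 h4).mpr h5⟩

lemma sum_eps_Q (hnn : ∀ a b, 0 ≤ ε a b) (t : ℕ) (v : Fin n → Fin n) :
    ∑ u : Fin n, ε u i * QMat ε t (v u) j
      = PS ε i j t (fun u F => reach F j (v u)) := by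
  rw [PS, ← sum_setF_pair
    (fun u F => (IsOutForest ε F ∧ F.card = t ∧ isRoot F j) ∧ 0 < ε u i ∧ reach F j (v u))
    (fun u F => ε u i * forestWeight ε F)]
  refine Finset.sum_congr rfl fun u _ => ?_
  rw [QMat_eq, Finset.mul_sum]
  by_cases hpos : 0 < ε u i
  · apply Finset.sum_congr _ (fun _ _ => rfl)
    apply setF_congr; intro F
    simp only [Set.mem_setOf_eq]
    constructor
    · rintro ⟨h1, h2, h3, h4⟩; exact ⟨⟨h1, h2, h3⟩, hpos, h4⟩
    · rintro ⟨⟨h1, h2, h3⟩, _, h4⟩; exact ⟨h1, h2, h3, h4⟩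
  · have h0 : ε u i = 0 := le_antisymm (not_lt.mp hpos) (hnn u i)
    rw [Finset.sum_eq_zero (fun F _ => by rw [h0, zero_mul]),
      Finset.sum_eq_zero (fun F _ => by rw [h0, zero_mul])]

lemma kirch_mul (hdiag : ∀ a, ε a a = 0) (t : ℕ) (i j : Fin n) :
    (kirchhoff ε * QMat ε t) i j
      = (∑ u : Fin n, ε u i * QMat ε t i j) - ∑ u : Fin n, ε u i * QMat ε t u j := by
  classical
  rw [Matrix.mul_apply]
  have hfil : ∑ k ∈ Finset.univ.filter (· ≠ i), ε k i = ∑ k : Fin n, ε k i := by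
    rw [Finset.sum_filter]
    refine Finset.sum_congr rfl fun k _ => ?_
    by_cases h : k = i
    · subst h; simp [hdiag]
    · simp [h]
  have hsplit : ∀ s : Fin n, kirchhoff ε i s * QMat ε t s j =
      (if s = i then (∑ u : Fin n, ε u i) * QMat ε t i j else 0)
        - (if s = i then 0 else ε s i * QMat ε t s j) := by
    intro s
    by_cases hsi : s = i
    · subst hsi
      simp [kirchhoff, hfil]
    · simp only [if_neg hsi, kirchhoff, Matrix.of_apply,
        if_neg (fun h : i = s => hsi h.symm), zero_sub, neg_mul]
  rw [Finset.sum_congr rfl (fun s _ => hsplit s), Finset.sum_sub_distrib,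
    Finset.sum_ite_eq' Finset.univ i (fun _ => (∑ u : Fin n, ε u i) * QMat ε t i j)]
  have h2 : ∑ s : Fin n, (if s = i then 0 else ε s i * QMat ε t s j)
      = ∑ s : Fin n, ε s i * QMat ε t s j := by
    refine Finset.sum_congr rfl fun s _ => ?_
    by_cases h : s = i
    · subst h; simp [hdiag]
    · simp [h]
  rw [h2, if_pos (Finset.mem_univ i), Finset.sum_mul]

end FP

namespace FP
variable {n : ℕ} {ε : Fin n → Fin n → ℝ} {F G : Arcs n} {u i j : Fin n}

lemma not_isRoot_exists (h : ¬ isRoot F i) : ∃ u, (u, i) ∈ F := by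
  rw [isRoot] at h; push_neg at h; exact h

lemma bij_A {t : ℕ} (hij : i ≠ j) :
    PS ε i j t (fun u F => (reach F j u ∧ ¬ reach F j i) ∧ isRoot F i)
      = QMat ε (t + 1) i j := by
  rw [PS, QMat_eq]
  refine Finset.sum_nbij' (fun x => insert (x.1, i) x.2)
    (fun G => (par G i, G.erase (par G i, i))) ?_ ?_ ?_ ?_ ?_
  · rintro ⟨u, F⟩ hx
    obtain ⟨⟨hF, hcard, hrootj⟩, hpos, ⟨hju, hnji⟩, hrooti⟩ := mem_setF.mp hx
    have hcyc : ¬ reach F i u := by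
      intro h
      rcases reach_total hF h hju with h' | h'
      · exact hij (reach_root_eq hrootj h')
      · exact hnji h'
    refine mem_setF.mpr ⟨insert_forest hF hrooti hpos hcyc, ?_, ?_, ?_⟩
    · rw [Finset.card_insert_of_notMem (hrooti u), hcard]
    · exact isRoot_insert (Ne.symm hij) hrootj
    · exact Relation.ReflTransGen.tail
        (reach_mono (Finset.subset_insert _ _) hju) (Finset.mem_insert_self _ _)
  · intro G hG
    obtain ⟨hF, hcard, hrootj, hreach⟩ := mem_setF.mp hG
    obtain ⟨c, hc1, hc2⟩ := reach_tail_exists hreach (Ne.symm hij)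
    have hpar : par G i = c := par_eq hF hc2
    have hmem : (par G i, i) ∈ G := by rw [hpar]; exact hc2
    have hjpar : reach G j (par G i) := by rw [hpar]; exact hc1
    refine mem_setF.mpr ⟨⟨forest_subset hF (Finset.erase_subset _ _), ?_,
      isRoot_subset (Finset.erase_subset _ _) hrootj⟩, hF.1 _ hmem, ⟨?_, ?_⟩,
      isRoot_erase_self hF hmem⟩
    · rw [Finset.card_erase_of_mem hmem, hcard]; omega
    · exact reach_erase hjpar (fun h => forest_no_back hF hmem h)
    · intro h
      exact hij (reach_root_eq (isRoot_erase_self hF hmem) h).symm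
  · rintro ⟨u, F⟩ hx
    obtain ⟨⟨hF, hcard, hrootj⟩, hpos, ⟨hju, hnji⟩, hrooti⟩ := mem_setF.mp hx
    have hcyc : ¬ reach F i u := by
      intro h
      rcases reach_total hF h hju with h' | h'
      · exact hij (reach_root_eq hrootj h')
      · exact hnji h'
    have hF' := insert_forest hF hrooti hpos hcyc
    have hp : par (insert (u, i) F) i = u := par_eq hF' (Finset.mem_insert_self _ _)
    dsimp only
    rw [Prod.mk.injEq]
    exact ⟨hp, by rw [hp, Finset.erase_insert (hrooti u)]⟩
  · intro G hG
    obtain ⟨hF, hcard, hrootj, hreach⟩ := mem_setF.mp hG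
    obtain ⟨c, hc1, hc2⟩ := reach_tail_exists hreach (Ne.symm hij)
    have hmem : (par G i, i) ∈ G := by rw [par_eq hF hc2]; exact hc2
    exact Finset.insert_erase hmem
  · rintro ⟨u, F⟩ hx
    obtain ⟨⟨hF, hcard, hrootj⟩, hpos, ⟨hju, hnji⟩, hrooti⟩ := mem_setF.mp hx
    exact (forestWeight_insert (hrooti u)).symm

lemma bij_C (t : ℕ) :
    PS ε i i t (fun u F => ¬ reach F i u)
      = ∑ G ∈ setF {G : Arcs n | (IsOutForest ε G ∧ G.card = t + 1) ∧ ¬ isRoot G i},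
          forestWeight ε G := by
  rw [PS]
  refine Finset.sum_nbij' (fun x => insert (x.1, i) x.2)
    (fun G => (par G i, G.erase (par G i, i))) ?_ ?_ ?_ ?_ ?_
  · rintro ⟨u, F⟩ hx
    obtain ⟨⟨hF, hcard, hrooti⟩, hpos, hnr⟩ := mem_setF.mp hx
    refine mem_setF.mpr ⟨⟨insert_forest hF hrooti hpos hnr, ?_⟩, ?_⟩
    · rw [Finset.card_insert_of_notMem (hrooti u), hcard]
    · exact fun h => h u (Finset.mem_insert_self _ _)
  · intro G hG
    obtain ⟨⟨hF, hcard⟩, hni⟩ := mem_setF.mp hG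
    have hmem : (par G i, i) ∈ G := par_spec (not_isRoot_exists hni)
    refine mem_setF.mpr ⟨⟨forest_subset hF (Finset.erase_subset _ _), ?_,
      isRoot_erase_self hF hmem⟩, hF.1 _ hmem, ?_⟩
    · rw [Finset.card_erase_of_mem hmem, hcard]; omega
    · exact fun h =>
        forest_no_back hF hmem (reach_mono (Finset.erase_subset _ _) h)
  · rintro ⟨u, F⟩ hx
    obtain ⟨⟨hF, hcard, hrooti⟩, hpos, hnr⟩ := mem_setF.mp hx
    have hF' := insert_forest hF hrooti hpos hnr
    have hp : par (insert (u, i) F) i = u := par_eq hF' (Finset.mem_insert_self _ _)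
    dsimp only
    rw [Prod.mk.injEq]
    exact ⟨hp, by rw [hp, Finset.erase_insert (hrooti u)]⟩
  · intro G hG
    obtain ⟨⟨hF, hcard⟩, hni⟩ := mem_setF.mp hG
    exact Finset.insert_erase (par_spec (not_isRoot_exists hni))
  · rintro ⟨u, F⟩ hx
    obtain ⟨⟨hF, hcard, hrooti⟩, hpos, hnr⟩ := mem_setF.mp hx
    exact (forestWeight_insert (hrooti u)).symm

lemma swapL {t : ℕ} (hij : i ≠ j) (hF : IsOutForest ε F) (hcard : F.card = t)
    (hrootj : isRoot F j) (hpos : 0 < ε u i) (hju : reach F j u)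
    (hnji : ¬ reach F j i) (hno : ¬ isRoot F i) :
    ((IsOutForest ε (insert (u, i) (F.erase (par F i, i))) ∧
      (insert (u, i) (F.erase (par F i, i))).card = t ∧
      isRoot (insert (u, i) (F.erase (par F i, i))) j) ∧
      0 < ε (par F i) i ∧
      (reach (insert (u, i) (F.erase (par F i, i))) j i ∧
       ¬ reach (insert (u, i) (F.erase (par F i, i))) j (par F i))) ∧
    par (insert (u, i) (F.erase (par F i, i))) i = u ∧
    insert (par F i, i) ((insert (u, i) (F.erase (par F i, i))).erase (u, i)) = F ∧
    ε u i * forestWeight ε F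
      = ε (par F i) i * forestWeight ε (insert (u, i) (F.erase (par F i, i))) := by
  have hwmem : (par F i, i) ∈ F := par_spec (not_isRoot_exists hno)
  have hF0 : IsOutForest ε (F.erase (par F i, i)) :=
    forest_subset hF (Finset.erase_subset _ _)
  have hrooti0 : isRoot (F.erase (par F i, i)) i := isRoot_erase_self hF hwmem
  have hcycF : ¬ reach F i u := by
    intro h
    rcases reach_total hF h hju with h' | h'
    · exact hij (reach_root_eq hrootj h')
    · exact hnji h'
  have hcyc0 : ¬ reach (F.erase (par F i, i)) i u :=
    fun h => hcycF (reach_mono (Finset.erase_subset _ _) h)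
  have hFt : IsOutForest ε (insert (u, i) (F.erase (par F i, i))) :=
    insert_forest hF0 hrooti0 hpos hcyc0
  have hcardpos : 1 ≤ F.card := Finset.card_pos.mpr ⟨_, hwmem⟩
  have hju0 : reach (F.erase (par F i, i)) j u := reach_erase hju hcycF
  have hrootjt : isRoot (insert (u, i) (F.erase (par F i, i))) j :=
    isRoot_insert (Ne.symm hij) (isRoot_subset (Finset.erase_subset _ _) hrootj)
  refine ⟨⟨⟨hFt, ?_, hrootjt⟩, hF.1 _ hwmem, ?_, ?_⟩, ?_, ?_, ?_⟩
  · rw [Finset.card_insert_of_notMem (hrooti0 u), Finset.card_erase_of_mem hwmem]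
    omega
  · exact Relation.ReflTransGen.tail
      (reach_mono (Finset.subset_insert _ _) hju0) (Finset.mem_insert_self _ _)
  · obtain ⟨r, hrroot, hrw⟩ := exists_root hF (par F i)
    have hrj : r ≠ j := fun h =>
      hnji (Relation.ReflTransGen.tail (h ▸ hrw) hwmem)
    have hri : r ≠ i := fun h => hno (h ▸ hrroot)
    have hrid : ¬ reach F i (par F i) := fun h => forest_no_back hF hwmem h
    have hrt : reach (insert (u, i) (F.erase (par F i, i))) r (par F i) :=
      reach_mono (Finset.subset_insert _ _) (reach_erase hrw hrid)
    have hrootrt : isRoot (insert (u, i) (F.erase (par F i, i))) r :=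
      isRoot_insert hri (isRoot_subset (Finset.erase_subset _ _) hrroot)
    intro h
    exact hrj (root_unique hFt hrootjt hrootrt h hrt).symm
  · exact par_eq hFt (Finset.mem_insert_self _ _)
  · rw [Finset.erase_insert (hrooti0 u), Finset.insert_erase hwmem]
  · rw [forestWeight_insert (hrooti0 u), forestWeight_erase hwmem]
    ring

lemma swapR {t : ℕ} (hij : i ≠ j) (hF : IsOutForest ε F) (hcard : F.card = t)
    (hrootj : isRoot F j) (hpos : 0 < ε u i) (hji : reach F j i)
    (hnju : ¬ reach F j u) :
    ((IsOutForest ε (insert (u, i) (F.erase (par F i, i))) ∧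
      (insert (u, i) (F.erase (par F i, i))).card = t ∧
      isRoot (insert (u, i) (F.erase (par F i, i))) j) ∧
      0 < ε (par F i) i ∧
      ((reach (insert (u, i) (F.erase (par F i, i))) j (par F i) ∧
        ¬ reach (insert (u, i) (F.erase (par F i, i))) j i) ∧
       ¬ isRoot (insert (u, i) (F.erase (par F i, i))) i)) ∧
    par (insert (u, i) (F.erase (par F i, i))) i = u ∧
    insert (par F i, i) ((insert (u, i) (F.erase (par F i, i))).erase (u, i)) = F ∧
    ε u i * forestWeight ε F
      = ε (par F i) i * forestWeight ε (insert (u, i) (F.erase (par F i, i))) := by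
  obtain ⟨c, hc1, hc2⟩ := reach_tail_exists hji (Ne.symm hij)
  have hwmem : (par F i, i) ∈ F := by rw [par_eq hF hc2]; exact hc2
  have hjw : reach F j (par F i) := by rw [par_eq hF hc2]; exact hc1
  have hF0 : IsOutForest ε (F.erase (par F i, i)) :=
    forest_subset hF (Finset.erase_subset _ _)
  have hrooti0 : isRoot (F.erase (par F i, i)) i := isRoot_erase_self hF hwmem
  have hcycF : ¬ reach F i u := fun h => hnju (hji.trans h)
  have hcyc0 : ¬ reach (F.erase (par F i, i)) i u :=
    fun h => hcycF (reach_mono (Finset.erase_subset _ _) h)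
  have hFt : IsOutForest ε (insert (u, i) (F.erase (par F i, i))) :=
    insert_forest hF0 hrooti0 hpos hcyc0
  have hcardpos : 1 ≤ F.card := Finset.card_pos.mpr ⟨_, hwmem⟩
  have hrootjt : isRoot (insert (u, i) (F.erase (par F i, i))) j :=
    isRoot_insert (Ne.symm hij) (isRoot_subset (Finset.erase_subset _ _) hrootj)
  refine ⟨⟨⟨hFt, ?_, hrootjt⟩, hF.1 _ hwmem, ⟨?_, ?_⟩, ?_⟩, ?_, ?_, ?_⟩
  · rw [Finset.card_insert_of_notMem (hrooti0 u), Finset.card_erase_of_mem hwmem]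
    omega
  · exact reach_mono (Finset.subset_insert _ _)
      (reach_erase hjw (fun h => forest_no_back hF hwmem h))
  · intro h
    rcases reach_insert_cases h with h' | ⟨h1, _⟩
    · exact (Ne.symm hij) (reach_root_eq hrooti0 h')
    · exact hnju (reach_mono (Finset.erase_subset _ _) h1)
  · exact fun h => h u (Finset.mem_insert_self _ _)
  · exact par_eq hFt (Finset.mem_insert_self _ _)
  · rw [Finset.erase_insert (hrooti0 u), Finset.insert_erase hwmem]
  · rw [forestWeight_insert (hrooti0 u), forestWeight_erase hwmem]
    ring

lemma bij_B {t : ℕ} (hij : i ≠ j) :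
    PS ε i j t (fun u F => (reach F j u ∧ ¬ reach F j i) ∧ ¬ isRoot F i)
      = PS ε i j t (fun u F => reach F j i ∧ ¬ reach F j u) := by
  rw [PS, PS]
  refine Finset.sum_nbij'
    (fun x => (par x.2 i, insert (x.1, i) (x.2.erase (par x.2 i, i))))
    (fun x => (par x.2 i, insert (x.1, i) (x.2.erase (par x.2 i, i))))
    ?_ ?_ ?_ ?_ ?_
  · rintro ⟨u, F⟩ hx
    obtain ⟨⟨hF, hcard, hrootj⟩, hpos, ⟨hju, hnji⟩, hno⟩ := mem_setF.mp hx
    exact mem_setF.mpr (swapL hij hF hcard hrootj hpos hju hnji hno).1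
  · rintro ⟨u, F⟩ hx
    obtain ⟨⟨hF, hcard, hrootj⟩, hpos, hji', hnju⟩ := mem_setF.mp hx
    exact mem_setF.mpr (swapR hij hF hcard hrootj hpos hji' hnju).1
  · rintro ⟨u, F⟩ hx
    obtain ⟨⟨hF, hcard, hrootj⟩, hpos, ⟨hju, hnji⟩, hno⟩ := mem_setF.mp hx
    obtain ⟨-, hp, hins, -⟩ := swapL hij hF hcard hrootj hpos hju hnji hno
    dsimp only
    rw [Prod.mk.injEq]
    constructor
    · rw [hp]
    · rw [hp, hins]
  · rintro ⟨u, F⟩ hx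
    obtain ⟨⟨hF, hcard, hrootj⟩, hpos, hji', hnju⟩ := mem_setF.mp hx
    obtain ⟨-, hp, hins, -⟩ := swapR hij hF hcard hrootj hpos hji' hnju
    dsimp only
    rw [Prod.mk.injEq]
    constructor
    · rw [hp]
    · rw [hp, hins]
  · rintro ⟨u, F⟩ hx
    obtain ⟨⟨hF, hcard, hrootj⟩, hpos, ⟨hju, hnji⟩, hno⟩ := mem_setF.mp hx
    exact (swapL hij hF hcard hrootj hpos hju hnji hno).2.2.2

end FP

namespace FP
variable {n : ℕ} {ε : Fin n → Fin n → ℝ} {i j : Fin n}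

lemma sum_eps_Q_const (hnn : ∀ a b, 0 ≤ ε a b) (t : ℕ) (i j : Fin n) :
    ∑ u : Fin n, ε u i * QMat ε t i j = PS ε i j t (fun _ F => reach F j i) := by
  simpa using sum_eps_Q hnn t (fun _ : Fin n => i) (i := i) (j := j)

lemma sum_eps_Q_id (hnn : ∀ a b, 0 ≤ ε a b) (t : ℕ) (i j : Fin n) :
    ∑ u : Fin n, ε u i * QMat ε t u j = PS ε i j t (fun u F => reach F j u) := by
  simpa using sum_eps_Q hnn t (fun u : Fin n => u) (i := i) (j := j)

lemma recA (hnn : ∀ a b, 0 ≤ ε a b) (hdiag : ∀ a, ε a a = 0) (t : ℕ) :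
    QMat ε (t + 1) + kirchhoff ε * QMat ε t
      = sigmaW ε (t + 1) • (1 : Matrix (Fin n) (Fin n) ℝ) := by
  ext i j
  simp only [Matrix.add_apply, Matrix.smul_apply, smul_eq_mul]
  rw [kirch_mul hdiag t i j, sum_eps_Q_const hnn t i j, sum_eps_Q_id hnn t i j]
  by_cases hij : i = j
  · subst hij
    rw [Matrix.one_apply_eq, mul_one]
    have e1 : PS ε i i t (fun _ F => reach F i i)
        = PS ε i i t (fun u F => reach F i u) + PS ε i i t (fun u F => ¬ reach F i u) := by
      rw [PS_split t (fun _ F => reach F i i) (fun u F => reach F i u)]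
      congr 1
      · exact PS_congr t (fun u F _ _ _ _ => by
          simp [reach_refl])
      · exact PS_congr t (fun u F _ _ _ _ => by
          simp [reach_refl])
    have e2 : sigmaW ε (t + 1) = QMat ε (t + 1) i i
        + PS ε i i t (fun u F => ¬ reach F i u) := by
      rw [sigmaW_eq, sum_setF_split (fun F : Arcs n => IsOutForest ε F ∧ F.card = t + 1)
        (fun F => isRoot F i) (forestWeight ε), bij_C t]
      congr 1
      rw [QMat_eq]
      apply Finset.sum_congr _ (fun _ _ => rfl)
      apply setF_congr
      intro F
      simp only [Set.mem_setOf_eq]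
      constructor
      · rintro ⟨⟨h1, h2⟩, h3⟩; exact ⟨h1, h2, h3, reach_refl _ _⟩
      · rintro ⟨h1, h2, h3, _⟩; exact ⟨⟨h1, h2⟩, h3⟩
    rw [e1, e2]
    ring
  · rw [Matrix.one_apply_ne hij, mul_zero]
    have e1 : PS ε i j t (fun u F => reach F j u)
        = PS ε i j t (fun u F => reach F j u ∧ reach F j i)
          + (QMat ε (t + 1) i j
            + PS ε i j t (fun u F => reach F j i ∧ ¬ reach F j u)) := by
      rw [PS_split t (fun u F => reach F j u) (fun u F => reach F j i)]
      congr 1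
      rw [PS_split t (fun u F => reach F j u ∧ ¬ reach F j i) (fun u F => isRoot F i)]
      rw [bij_A hij, bij_B hij]
    have e2 : PS ε i j t (fun _ F => reach F j i)
        = PS ε i j t (fun u F => reach F j u ∧ reach F j i)
          + PS ε i j t (fun u F => reach F j i ∧ ¬ reach F j u) := by
      rw [PS_split t (fun _ F => reach F j i) (fun u F => reach F j u)]
      congr 1
      exact PS_congr t (fun u F _ _ _ _ => by tauto)
    rw [e1, e2]
    ring

end FP

namespace FP
variable {n : ℕ} {ε : Fin n → Fin n → ℝ} {i j : Fin n}

lemma key1_gen (hnn : ∀ a b, 0 ≤ ε a b) (hdiag : ∀ a, ε a a = 0) (τ : ℝ) (N : ℕ) :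
    (1 + τ • kirchhoff ε) * (∑ t ∈ Finset.range (N + 1), τ ^ t • QMat ε t)
      = (∑ t ∈ Finset.range (N + 1), τ ^ t * sigmaW ε t) •
          (1 : Matrix (Fin n) (Fin n) ℝ)
        + τ ^ (N + 1) • (kirchhoff ε * QMat ε N) := by
  induction N with
  | zero =>
    simp [QMat_zero, sigmaW_zero, add_mul, Matrix.smul_mul]
  | succ N ih =>
    have h2 : (1 + τ • kirchhoff ε) * (τ ^ (N + 1) • QMat ε (N + 1))
        = τ ^ (N + 1) • QMat ε (N + 1)
          + τ ^ (N + 1 + 1) • (kirchhoff ε * QMat ε (N + 1)) := by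
      rw [add_mul, one_mul, Matrix.smul_mul, Matrix.mul_smul, smul_smul,
        ← pow_succ']
    have h3 : τ ^ (N + 1) • (kirchhoff ε * QMat ε N)
          + τ ^ (N + 1) • QMat ε (N + 1)
        = (τ ^ (N + 1) * sigmaW ε (N + 1)) • (1 : Matrix (Fin n) (Fin n) ℝ) := by
      rw [← smul_add, add_comm (kirchhoff ε * QMat ε N) (QMat ε (N + 1)), recA hnn hdiag N, smul_smul]
    have hs1 : ∑ t ∈ Finset.range (N + 1 + 1), τ ^ t • QMat ε t
        = (∑ t ∈ Finset.range (N + 1), τ ^ t • QMat ε t)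
          + τ ^ (N + 1) • QMat ε (N + 1) := Finset.sum_range_succ _ _
    have hs2 : ∑ t ∈ Finset.range (N + 1 + 1), τ ^ t * sigmaW ε t
        = (∑ t ∈ Finset.range (N + 1), τ ^ t * sigmaW ε t)
          + τ ^ (N + 1) * sigmaW ε (N + 1) := Finset.sum_range_succ _ _
    rw [hs1, mul_add, ih, h2, hs2, add_smul, ← h3]
    abel

lemma LQm (hnn : ∀ a b, 0 ≤ ε a b) (hdiag : ∀ a, ε a a = 0) :
    kirchhoff ε * QMat ε (maxForestCard ε) = 0 := by
  have h := recA (ε := ε) hnn hdiag (maxForestCard ε)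
  rw [QMat_zero_of_gt (by omega), sigmaW_zero_of_gt (by omega), zero_add, zero_smul] at h
  exact h

noncomputable def Ppoly (ε : Fin n → Fin n → ℝ) (τ : ℝ) : Matrix (Fin n) (Fin n) ℝ :=
  ∑ t ∈ Finset.range (maxForestCard ε + 2), τ ^ t • QMat ε t

noncomputable def sS (ε : Fin n → Fin n → ℝ) (τ : ℝ) : ℝ :=
  ∑ t ∈ Finset.range (maxForestCard ε + 2), τ ^ t * sigmaW ε t

lemma key1 (hnn : ∀ a b, 0 ≤ ε a b) (hdiag : ∀ a, ε a a = 0) (τ : ℝ) :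
    (1 + τ • kirchhoff ε) * Ppoly ε τ = sS ε τ • (1 : Matrix (Fin n) (Fin n) ℝ) := by
  have h := key1_gen hnn hdiag τ (maxForestCard ε + 1)
  rw [QMat_zero_of_gt (by omega), Matrix.mul_zero, smul_zero, add_zero] at h
  exact h

lemma sS_pos (hτ : 0 ≤ τ) : 0 < sS ε τ := by
  rw [sS]
  have h0 : (0:ℕ) ∈ Finset.range (maxForestCard ε + 2) := by simp
  refine Finset.sum_pos' (fun t _ => mul_nonneg (pow_nonneg hτ t) (sigmaW_nonneg t)) ?_
  exact ⟨0, h0, by simp [sigmaW_zero]⟩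

lemma key2 (hnn : ∀ a b, 0 ≤ ε a b) (hdiag : ∀ a, ε a a = 0) (τ : ℝ)
    (hs : sS ε τ ≠ 0) :
    Ppoly ε τ * (1 + τ • kirchhoff ε) = sS ε τ • (1 : Matrix (Fin n) (Fin n) ℝ) := by
  have h1 : (1 + τ • kirchhoff ε) * ((sS ε τ)⁻¹ • Ppoly ε τ) = 1 := by
    rw [Matrix.mul_smul, key1 hnn hdiag, smul_smul, inv_mul_cancel₀ hs, one_smul]
  have h2 := mul_eq_one_comm.mp h1
  rw [Matrix.smul_mul] at h2
  calc Ppoly ε τ * (1 + τ • kirchhoff ε)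
      = sS ε τ • ((sS ε τ)⁻¹ • (Ppoly ε τ * (1 + τ • kirchhoff ε))) := by
        rw [smul_smul, mul_inv_cancel₀ hs, one_smul]
    _ = sS ε τ • 1 := by rw [h2]

lemma recB (hnn : ∀ a b, 0 ≤ ε a b) (hdiag : ∀ a, ε a a = 0) (t : ℕ) :
    QMat ε (t + 1) + QMat ε t * kirchhoff ε
      = sigmaW ε (t + 1) • (1 : Matrix (Fin n) (Fin n) ℝ) := by
  by_cases hbig : maxForestCard ε < t
  · rw [QMat_zero_of_gt (by omega), QMat_zero_of_gt (by omega),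
      sigmaW_zero_of_gt (by omega), Matrix.zero_mul, add_zero, zero_smul]
  · have ht : t ≤ maxForestCard ε := by omega
    ext i j
    set M := maxForestCard ε + 2 with hM
    set q : Polynomial ℝ :=
      (∑ s ∈ Finset.range M, Polynomial.C (QMat ε s i j) * Polynomial.X ^ s)
      + (∑ s ∈ Finset.range M,
          Polynomial.C ((QMat ε s * kirchhoff ε) i j) * Polynomial.X ^ (s + 1))
      - (∑ s ∈ Finset.range M,
          Polynomial.C (sigmaW ε s * (1 : Matrix (Fin n) (Fin n) ℝ) i j)
            * Polynomial.X ^ s) with hq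
    have hA : ∀ τ : ℝ, (Ppoly ε τ) i j = ∑ s ∈ Finset.range M, QMat ε s i j * τ ^ s := by
      intro τ
      rw [Ppoly, Matrix.sum_apply]
      exact Finset.sum_congr rfl fun s _ => by
        rw [Matrix.smul_apply, smul_eq_mul, mul_comm]
    have hB : ∀ τ : ℝ, (Ppoly ε τ * kirchhoff ε) i j
        = ∑ s ∈ Finset.range M, (QMat ε s * kirchhoff ε) i j * τ ^ s := by
      intro τ
      rw [Ppoly, Finset.sum_mul, Matrix.sum_apply]
      exact Finset.sum_congr rfl fun s _ => by
        rw [Matrix.smul_mul, Matrix.smul_apply, smul_eq_mul, mul_comm]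
    have heval : ∀ τ : ℝ, sS ε τ ≠ 0 → q.eval τ = 0 := by
      intro τ hs
      have hk := key2 hnn hdiag τ hs
      have hC : Ppoly ε τ * (1 + τ • kirchhoff ε)
          = Ppoly ε τ + τ • (Ppoly ε τ * kirchhoff ε) := by
        rw [mul_add, mul_one, Matrix.mul_smul]
      rw [hC] at hk
      have hentry := congrArg (fun A : Matrix (Fin n) (Fin n) ℝ => A i j) hk
      simp only [Matrix.add_apply, Matrix.smul_apply, smul_eq_mul] at hentry
      rw [hq]
      simp only [Polynomial.eval_sub, Polynomial.eval_add, Polynomial.eval_finset_sum,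
        Polynomial.eval_mul, Polynomial.eval_pow, Polynomial.eval_C, Polynomial.eval_X]
      rw [sub_eq_zero]
      calc (∑ s ∈ Finset.range M, QMat ε s i j * τ ^ s)
            + ∑ s ∈ Finset.range M, (QMat ε s * kirchhoff ε) i j * τ ^ (s + 1)
          = Ppoly ε τ i j + τ * (Ppoly ε τ * kirchhoff ε) i j := by
            rw [hA, hB, Finset.mul_sum]
            congr 1
            exact Finset.sum_congr rfl fun s _ => by ring
        _ = sS ε τ * (1 : Matrix (Fin n) (Fin n) ℝ) i j := hentry
        _ = ∑ s ∈ Finset.range M,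
              sigmaW ε s * (1 : Matrix (Fin n) (Fin n) ℝ) i j * τ ^ s := by
            rw [sS, Finset.sum_mul]
            exact Finset.sum_congr rfl fun s _ => by ring
    have hqz : q = 0 := by
      apply Polynomial.eq_zero_of_infinite_isRoot
      have hsub : Set.Ici (0 : ℝ) ⊆ {x | q.IsRoot x} := fun τ hτ =>
        heval τ (ne_of_gt (sS_pos hτ))
      exact Set.Infinite.mono hsub (Set.Ici_infinite 0)
    have hco := congrArg (fun p : Polynomial ℝ => p.coeff (t + 1)) hqz
    simp only [Polynomial.coeff_zero] at hco
    rw [hq] at hco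
    simp only [Polynomial.coeff_sub, Polynomial.coeff_add, Polynomial.finset_sum_coeff,
      Polynomial.coeff_C_mul_X_pow] at hco
    have c1 : (∑ s ∈ Finset.range M, if t + 1 = s then QMat ε s i j else 0)
        = QMat ε (t + 1) i j := by
      rw [Finset.sum_ite_eq]
      rw [if_pos (by simp only [Finset.mem_range]; omega)]
    have c2 : (∑ s ∈ Finset.range M,
          if t + 1 = s + 1 then (QMat ε s * kirchhoff ε) i j else 0)
        = (QMat ε t * kirchhoff ε) i j := by
      have : ∀ s ∈ Finset.range M,
          (if t + 1 = s + 1 then (QMat ε s * kirchhoff ε) i j else 0)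
            = (if t = s then (QMat ε s * kirchhoff ε) i j else 0) := by
        intro s _
        exact if_congr (by omega) rfl rfl
      rw [Finset.sum_congr rfl this, Finset.sum_ite_eq]
      rw [if_pos (by simp only [Finset.mem_range]; omega)]
    have c3 : (∑ s ∈ Finset.range M,
          if t + 1 = s then sigmaW ε s * (1 : Matrix (Fin n) (Fin n) ℝ) i j else 0)
        = sigmaW ε (t + 1) * (1 : Matrix (Fin n) (Fin n) ℝ) i j := by
      rw [Finset.sum_ite_eq]
      rw [if_pos (by simp only [Finset.mem_range]; omega)]
    rw [c1, c2, c3] at hco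
    simp only [Matrix.add_apply, Matrix.smul_apply, smul_eq_mul]
    linarith

end FP

namespace FP
variable {n : ℕ} {ε : Fin n → Fin n → ℝ}

lemma QmL (hnn : ∀ a b, 0 ≤ ε a b) (hdiag : ∀ a, ε a a = 0) :
    QMat ε (maxForestCard ε) * kirchhoff ε = 0 := by
  have h := recB (ε := ε) hnn hdiag (maxForestCard ε)
  rw [QMat_zero_of_gt (by omega), sigmaW_zero_of_gt (by omega), zero_add, zero_smul] at h
  exact h

lemma QkQm (hnn : ∀ a b, 0 ≤ ε a b) (hdiag : ∀ a, ε a a = 0) (k : ℕ) :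
    QMat ε k * QMat ε (maxForestCard ε)
      = sigmaW ε k • QMat ε (maxForestCard ε) := by
  induction k with
  | zero => rw [QMat_zero, one_mul, sigmaW_zero, one_smul]
  | succ k ih =>
    have h : QMat ε (k + 1)
        = sigmaW ε (k + 1) • (1 : Matrix (Fin n) (Fin n) ℝ)
          - kirchhoff ε * QMat ε k :=
      eq_sub_of_add_eq (recA hnn hdiag k)
    rw [h, sub_mul, Matrix.smul_mul, one_mul, Matrix.mul_assoc, ih, Matrix.mul_smul,
      LQm hnn hdiag, smul_zero, sub_zero]

lemma QmQk (hnn : ∀ a b, 0 ≤ ε a b) (hdiag : ∀ a, ε a a = 0) (k : ℕ) :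
    QMat ε (maxForestCard ε) * QMat ε k
      = sigmaW ε k • QMat ε (maxForestCard ε) := by
  induction k with
  | zero => rw [QMat_zero, mul_one, sigmaW_zero, one_smul]
  | succ k ih =>
    have h : QMat ε (k + 1)
        = sigmaW ε (k + 1) • (1 : Matrix (Fin n) (Fin n) ℝ)
          - QMat ε k * kirchhoff ε :=
      eq_sub_of_add_eq (recB hnn hdiag k)
    rw [h, mul_sub, Matrix.mul_smul, mul_one, ← Matrix.mul_assoc, ih, Matrix.smul_mul,
      QmL hnn hdiag, smul_zero, sub_zero]

lemma Jk_mul_Jbar (hnn : ∀ a b, 0 ≤ ε a b) (hdiag : ∀ a, ε a a = 0) {k : ℕ}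
    (hσk : sigmaW ε k ≠ 0) :
    ((sigmaW ε k)⁻¹ • QMat ε k) * Jbar ε = Jbar ε := by
  rw [Jbar, Matrix.smul_mul, Matrix.mul_smul, QkQm hnn hdiag k, smul_smul, smul_smul]
  congr 1
  rw [mul_right_comm, inv_mul_cancel₀ hσk, one_mul]

lemma Jbar_mul_Jk (hnn : ∀ a b, 0 ≤ ε a b) (hdiag : ∀ a, ε a a = 0) {k : ℕ}
    (hσk : sigmaW ε k ≠ 0) :
    Jbar ε * ((sigmaW ε k)⁻¹ • QMat ε k) = Jbar ε := by
  rw [Jbar, Matrix.smul_mul, Matrix.mul_smul, QmQk hnn hdiag k, smul_smul, smul_smul]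
  congr 1
  rw [mul_assoc, inv_mul_cancel₀ hσk, mul_one]

lemma Ppoly_mul_Jbar (hnn : ∀ a b, 0 ≤ ε a b) (hdiag : ∀ a, ε a a = 0) (τ : ℝ) :
    Ppoly ε τ * Jbar ε = sS ε τ • Jbar ε := by
  rw [Jbar, Matrix.mul_smul, Ppoly, Finset.sum_mul]
  have h : ∀ t ∈ Finset.range (maxForestCard ε + 2),
      (τ ^ t • QMat ε t) * QMat ε (maxForestCard ε)
        = (τ ^ t * sigmaW ε t) • QMat ε (maxForestCard ε) := by
    intro t _
    rw [Matrix.smul_mul, QkQm hnn hdiag t, smul_smul]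
  rw [Finset.sum_congr rfl h, ← Finset.sum_smul, ← sS, smul_comm]

lemma Jbar_mul_Ppoly (hnn : ∀ a b, 0 ≤ ε a b) (hdiag : ∀ a, ε a a = 0) (τ : ℝ) :
    Jbar ε * Ppoly ε τ = sS ε τ • Jbar ε := by
  rw [Jbar, Matrix.smul_mul, Ppoly, Finset.mul_sum]
  have h : ∀ t ∈ Finset.range (maxForestCard ε + 2),
      QMat ε (maxForestCard ε) * (τ ^ t • QMat ε t)
        = (τ ^ t * sigmaW ε t) • QMat ε (maxForestCard ε) := by
    intro t _
    rw [Matrix.mul_smul, QmQk hnn hdiag t, smul_smul]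
  rw [Finset.sum_congr rfl h, ← Finset.sum_smul, ← sS, smul_comm]

lemma inv_one_add (hnn : ∀ a b, 0 ≤ ε a b) (hdiag : ∀ a, ε a a = 0) {τ : ℝ}
    (hτ : 0 < τ) :
    (1 + τ • kirchhoff ε)⁻¹ = (sS ε τ)⁻¹ • Ppoly ε τ := by
  apply Matrix.inv_eq_right_inv
  rw [Matrix.mul_smul, key1 hnn hdiag, smul_smul, inv_mul_cancel₀ (ne_of_gt (sS_pos hτ.le)),
    one_smul]

end FP

/-- `J̄_k·J̄ = J̄·J̄_k = J̄` for `1 ≤ k ≤ n−v` (in particular `J̄² = J̄`),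
and `Q(τ)·J̄ = J̄·Q(τ) = J̄` for every `τ > 0`. -/
theorem normalized_forest_matrices_absorb_Jbar (n : ℕ) (hn : 1 < n)
    (ε : Fin n → Fin n → ℝ)
    (hnonneg : ∀ i j, 0 ≤ ε i j) (hdiag : ∀ i, ε i i = 0) :
    (∀ k : ℕ, 1 ≤ k → k ≤ maxForestCard ε →
      ((sigmaW ε k)⁻¹ • QMat ε k) * Jbar ε = Jbar ε ∧
      Jbar ε * ((sigmaW ε k)⁻¹ • QMat ε k) = Jbar ε) ∧
    Jbar ε * Jbar ε = Jbar ε ∧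
    (∀ τ : ℝ, 0 < τ →
      (1 + τ • kirchhoff ε)⁻¹ * Jbar ε = Jbar ε ∧
      Jbar ε * (1 + τ • kirchhoff ε)⁻¹ = Jbar ε) := by
  have hσm : sigmaW ε (maxForestCard ε) ≠ 0 := ne_of_gt (FP.sigmaW_pos le_rfl)
  refine ⟨?_, ?_, ?_⟩
  · intro k hk1 hk2
    have hσk : sigmaW ε k ≠ 0 := ne_of_gt (FP.sigmaW_pos hk2)
    exact ⟨FP.Jk_mul_Jbar hnonneg hdiag hσk, FP.Jbar_mul_Jk hnonneg hdiag hσk⟩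
  · exact FP.Jbar_mul_Jk hnonneg hdiag hσm
  · intro τ hτ
    constructor
    · rw [FP.inv_one_add hnonneg hdiag hτ, Matrix.smul_mul,
        FP.Ppoly_mul_Jbar hnonneg hdiag τ, smul_smul,
        inv_mul_cancel₀ (ne_of_gt (FP.sS_pos hτ.le)), one_smul]
    · rw [FP.inv_one_add hnonneg hdiag hτ, Matrix.mul_smul,
        FP.Jbar_mul_Ppoly hnonneg hdiag τ, smul_smul,
        inv_mul_cancel₀ (ne_of_gt (FP.sS_pos hτ.le)), one_smul]
end

section
/- For every weighted digraph Γ and every k with 0 ≤ k ≤ n−v, the normalized matrix of out forests J̄_k = σ_k^{−1} Q_k is stochastic: all its entries are nonnegative and each of its row sums equals 1. -/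
open Matrix BigOperators Filter

section Aux

variable {n : ℕ} {ε : Fin n → Fin n → ℝ}

lemma isOutForest_subset {F G : Finset (Fin n × Fin n)} (hG : IsOutForest ε G)
    (hFG : F ⊆ G) : IsOutForest ε F := by
  obtain ⟨h1, h2, h3⟩ := hG
  refine ⟨fun p hp => h1 p (hFG hp), fun u u' v hu hu' => h2 u u' v (hFG hu) (hFG hu'), ?_⟩
  rintro ⟨k, f, hk, hf0, hf⟩
  exact h3 ⟨k, f, hk, hf0, fun i hi => hFG (hf i hi)⟩

lemma isOutForest_empty : IsOutForest ε (∅ : Finset (Fin n × Fin n)) := by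
  refine ⟨by simp, by simp, ?_⟩
  rintro ⟨k, f, hk, -, hf⟩
  simpa using hf 0 hk

lemma forestWeight_pos {F : Finset (Fin n × Fin n)} (hF : IsOutForest ε F) :
    0 < forestWeight ε F :=
  Finset.prod_pos fun p hp => hF.1 p hp

lemma exists_forest_card {k : ℕ} (hk : k ≤ maxForestCard ε) :
    ∃ F : Finset (Fin n × Fin n), IsOutForest ε F ∧ F.card = k := by
  have hne : maxForestCard ε ∈
      {m | ∃ F : Finset (Fin n × Fin n), IsOutForest ε F ∧ F.card = m} := by
    have h0 : (0 : ℕ) ∈ {m | ∃ F : Finset (Fin n × Fin n), IsOutForest ε F ∧ F.card = m} :=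
      ⟨∅, isOutForest_empty, rfl⟩
    have hbd : BddAbove {m | ∃ F : Finset (Fin n × Fin n), IsOutForest ε F ∧ F.card = m} :=
      ⟨(Finset.univ : Finset (Fin n × Fin n)).card,
        fun m hm => by obtain ⟨F, _, hc⟩ := hm; exact hc ▸ Finset.card_le_univ F⟩
    exact Nat.sSup_mem ⟨0, h0⟩ hbd
  obtain ⟨F, hF, hc⟩ := hne
  obtain ⟨G, hGF, hGc⟩ := Finset.exists_subset_card_eq (s := F) (hc ▸ hk)
  exact ⟨G, isOutForest_subset hF hGF, hGc⟩

lemma exists_root {F : Finset (Fin n × Fin n)} (hF : IsOutForest ε F) (i : Fin n) :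
    ∃ j, (∀ u, (u, j) ∉ F) ∧ Relation.ReflTransGen (fun a b => (a, b) ∈ F) j i := by
  by_contra hcon
  push_neg at hcon
  have key : ∀ v, Relation.ReflTransGen (fun a b => (a, b) ∈ F) v i →
      ∃ u, (u, v) ∈ F := by
    intro v hv
    by_contra h
    push_neg at h
    exact hcon v h hv
  let T := {v : Fin n // Relation.ReflTransGen (fun a b => (a, b) ∈ F) v i}
  let step : T → T := fun v => ⟨(key v.1 v.2).choose,
    Relation.ReflTransGen.head ((key v.1 v.2).choose_spec) v.2⟩
  let g : ℕ → T := fun m => step^[m] ⟨i, Relation.ReflTransGen.refl⟩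
  have harc : ∀ m, ((g (m + 1)).1, (g m).1) ∈ F := by
    intro m
    have hstep : g (m + 1) = step (g m) := Function.iterate_succ_apply' step m _
    rw [hstep]
    exact (key (g m).1 (g m).2).choose_spec
  have build : ∀ a b : ℕ, a < b → (g a).1 = (g b).1 → False := by
    intro a b hlt hg
    apply hF.2.2
    refine ⟨b - a, fun j => (g (b - j)).1, by omega, ?_, ?_⟩
    · show (g (b - 0)).1 = (g (b - (b - a))).1
      have h1 : b - 0 = b := by omega
      have h2 : b - (b - a) = a := by omega
      rw [h1, h2]
      exact hg.symm
    · intro j hj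
      show ((g (b - j)).1, (g (b - (j + 1))).1) ∈ F
      have e1 : b - j = (b - (j + 1)) + 1 := by omega
      rw [e1]
      exact harc _
  obtain ⟨a, b, hab, heq⟩ := Finite.exists_ne_map_eq_of_infinite (fun m : ℕ => (g m).1)
  rcases hab.lt_or_gt with h | h
  · exact build a b h heq
  · exact build b a h heq.symm

lemma root_unique {F : Finset (Fin n × Fin n)} (hF : IsOutForest ε F)
    {x r : Fin n} (hr : ∀ u, (u, r) ∉ F)
    (h1 : Relation.ReflTransGen (fun a b => (a, b) ∈ F) r x) :
    ∀ r' : Fin n, (∀ u, (u, r') ∉ F) →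
      Relation.ReflTransGen (fun a b => (a, b) ∈ F) r' x → r = r' := by
  induction h1 with
  | refl =>
    intro r' hr' h2
    rcases h2.cases_tail with he | ⟨c, _, hc⟩
    · exact he
    · exact absurd hc (hr c)
  | @tail b c hab hbc ih =>
    intro r' hr' h2
    rcases h2.cases_tail with he | ⟨d, hd1, hd2⟩
    · exact absurd (he ▸ hbc) (hr' b)
    · have hdb : d = b := hF.2.1 d b c hd2 hbc
      exact ih r' hr' (hdb ▸ hd1)

open Classical in
/-- A choice of root of the tree containing `i`. -/
noncomputable def rootOf {n : ℕ} (F : Finset (Fin n × Fin n)) (i : Fin n) : Fin n :=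
  if h : ∃ j, (∀ u, (u, j) ∉ F) ∧ Relation.ReflTransGen (fun a b => (a, b) ∈ F) j i
  then h.choose else i

lemma rootOf_spec {F : Finset (Fin n × Fin n)} (hF : IsOutForest ε F) (i : Fin n) :
    (∀ u, (u, rootOf F i) ∉ F) ∧
      Relation.ReflTransGen (fun a b => (a, b) ∈ F) (rootOf F i) i := by
  have h := exists_root hF i
  rw [rootOf, dif_pos h]
  exact h.choose_spec

lemma rootOf_eq {F : Finset (Fin n × Fin n)} (hF : IsOutForest ε F) {i j : Fin n}
    (hj : ∀ u, (u, j) ∉ F)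
    (hreach : Relation.ReflTransGen (fun a b => (a, b) ∈ F) j i) :
    rootOf F i = j :=
  root_unique hF (rootOf_spec hF i).1 (rootOf_spec hF i).2 j hj hreach

end Aux

/-- for `0 ≤ k ≤ n−v`, the normalized matrix `J̄_k = σ_k⁻¹ Q_k`
is stochastic. -/
theorem normalized_QMat_stochastic (n : ℕ) (hn : 1 < n) (ε : Fin n → Fin n → ℝ)
    (hnonneg : ∀ i j, 0 ≤ ε i j) (hdiag : ∀ i, ε i i = 0) :
    ∀ k : ℕ, k ≤ maxForestCard ε →
      (∀ i j : Fin n, 0 ≤ ((sigmaW ε k)⁻¹ • QMat ε k) i j) ∧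
      (∀ i : Fin n, ∑ j, ((sigmaW ε k)⁻¹ • QMat ε k) i j = 1) := by
  intro k hk
  classical
  set S : Set (Finset (Fin n × Fin n)) := {F | IsOutForest ε F ∧ F.card = k} with hS
  have hSfin : S.Finite := Set.toFinite S
  have hsigma : sigmaW ε k = ∑ F ∈ hSfin.toFinset, forestWeight ε F :=
    finsum_mem_eq_finite_toFinset_sum _ hSfin
  have hsig_pos : 0 < sigmaW ε k := by
    rw [hsigma]
    obtain ⟨F0, hF0, hc0⟩ := exists_forest_card hk
    refine Finset.sum_pos (fun F hF => forestWeight_pos (hSfin.mem_toFinset.mp hF).1)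
      ⟨F0, hSfin.mem_toFinset.mpr ⟨hF0, hc0⟩⟩
  have hQ : ∀ i j : Fin n, QMat ε k i j =
      ∑ F ∈ hSfin.toFinset.filter (fun F => rootOf F i = j), forestWeight ε F := by
    intro i j
    have hfin : ({F : Finset (Fin n × Fin n) | IsOutForest ε F ∧ F.card = k ∧
        (∀ u, (u, j) ∉ F) ∧
        Relation.ReflTransGen (fun a b => (a, b) ∈ F) j i}).Finite := Set.toFinite _
    show (∑ᶠ F ∈ _, forestWeight ε F) = _
    rw [finsum_mem_eq_finite_toFinset_sum _ hfin]
    apply Finset.sum_congr _ (fun _ _ => rfl)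
    ext F
    simp only [Set.Finite.mem_toFinset, Set.mem_setOf_eq, Finset.mem_filter, hS]
    constructor
    · rintro ⟨h1, h2, h3, h4⟩
      exact ⟨⟨h1, h2⟩, rootOf_eq h1 h3 h4⟩
    · rintro ⟨⟨h1, h2⟩, hr⟩
      obtain ⟨hroot, hreach⟩ := rootOf_spec h1 i
      rw [hr] at hroot hreach
      exact ⟨h1, h2, hroot, hreach⟩
  have hQnonneg : ∀ i j, 0 ≤ QMat ε k i j := by
    intro i j
    rw [hQ i j]
    exact Finset.sum_nonneg fun F hF =>
      (forestWeight_pos (hSfin.mem_toFinset.mp (Finset.mem_filter.mp hF).1).1).le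
  constructor
  · intro i j
    simp only [Matrix.smul_apply, smul_eq_mul]
    exact mul_nonneg (inv_nonneg.mpr hsig_pos.le) (hQnonneg i j)
  · intro i
    have hrow : ∑ j, QMat ε k i j = sigmaW ε k := by
      simp_rw [hQ i]
      rw [Finset.sum_fiberwise hSfin.toFinset (fun F => rootOf F i) (forestWeight ε)]
      exact hsigma.symm
    simp only [Matrix.smul_apply, smul_eq_mul]
    rw [← Finset.mul_sum, hrow, inv_mul_cancel₀ hsig_pos.ne']
end

section
/- For every weighted digraph Γ, the matrix Z = L + J̄ᵀ (the sum of the Kirchhoff matrix and the transpose of the normalized matrix of maximum out forests) is nonsingular. -/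
open Matrix BigOperators Filter

namespace AgaevChebotarev

variable {n : ℕ}

/-- Reachability along arcs of `F`. -/
def Rch (F : Finset (Fin n × Fin n)) : Fin n → Fin n → Prop :=
  Relation.ReflTransGen (fun a b => (a, b) ∈ F)

def NoCyc (F : Finset (Fin n × Fin n)) : Prop :=
  ∀ v, ¬ Relation.TransGen (fun a b : Fin n => (a, b) ∈ F) v v

def InDeg1 (F : Finset (Fin n × Fin n)) : Prop :=
  ∀ u u' v : Fin n, (u, v) ∈ F → (u', v) ∈ F → u = u'

def IsRoot (F : Finset (Fin n × Fin n)) (j : Fin n) : Prop := ∀ u, (u, j) ∉ F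

lemma transGen_exists_f {r : Fin n → Fin n → Prop} {a b : Fin n}
    (h : Relation.TransGen r a b) :
    ∃ (k : ℕ) (f : ℕ → Fin n), 0 < k ∧ f 0 = a ∧ f k = b ∧ ∀ i < k, r (f i) (f (i + 1)) := by
  induction h with
  | @single c hab =>
      exact ⟨1, fun m => if m = 0 then a else c, one_pos, by simp, by simp, by
        intro i hi
        interval_cases i
        simpa using hab⟩
  | @tail c d hab hbc ih =>
      obtain ⟨k, f, hk, h0, hkb, harc⟩ := ih
      refine ⟨k + 1, fun m => if m ≤ k then f m else d, by omega, by simp [h0], by simp, ?_⟩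
      intro i hi
      rcases lt_or_eq_of_le (Nat.lt_succ_iff.mp hi) with hik | hik
      · simpa [Nat.le_of_lt hik, Nat.succ_le_of_lt hik] using harc i hik
      · subst hik
        simpa [hkb] using hbc

lemma isOutForest_iff {ε : Fin n → Fin n → ℝ} {F : Finset (Fin n × Fin n)} :
    IsOutForest ε F ↔ (∀ p ∈ F, 0 < ε p.1 p.2) ∧ InDeg1 F ∧ NoCyc F := by
  constructor
  · rintro ⟨hpos, hdeg, hcyc⟩
    refine ⟨hpos, hdeg, fun v hv => hcyc ?_⟩
    obtain ⟨k, f, hk, h0, hkb, harc⟩ := transGen_exists_f hv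
    exact ⟨k, f, hk, by rw [h0, hkb], harc⟩
  · rintro ⟨hpos, hdeg, hcyc⟩
    refine ⟨hpos, hdeg, ?_⟩
    rintro ⟨k, f, hk, hfk, harc⟩
    apply hcyc (f 0)
    have key : ∀ i ≤ k, 0 < i → Relation.TransGen (fun a b : Fin n => (a, b) ∈ F) (f 0) (f i) := by
      intro i hik hi
      induction i with
      | zero => omega
      | succ m ih =>
          rcases Nat.eq_zero_or_pos m with hm | hm
          · subst hm
            exact Relation.TransGen.single (harc 0 (by omega))
          · exact (ih (by omega) hm).tail (harc m (by omega))
    have := key k le_rfl hk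
    rwa [← hfk] at this

lemma rch_mono {F F' : Finset (Fin n × Fin n)} (h : F ⊆ F') {a b : Fin n} :
    Rch F a b → Rch F' a b :=
  fun hr => Relation.ReflTransGen.mono (fun x y hxy => h hxy) a b hr

lemma noCyc_subset {F F' : Finset (Fin n × Fin n)} (h : F ⊆ F') (hc : NoCyc F') : NoCyc F :=
  fun v hv => hc v (Relation.TransGen.mono (fun x y hxy => h hxy) v v hv)

lemma inDeg1_subset {F F' : Finset (Fin n × Fin n)} (h : F ⊆ F') (hc : InDeg1 F') : InDeg1 F :=
  fun u u' v h1 h2 => hc u u' v (h h1) (h h2)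

lemma isOutForest_subset {ε : Fin n → Fin n → ℝ} {F F' : Finset (Fin n × Fin n)}
    (h : F ⊆ F') (hf : IsOutForest ε F') : IsOutForest ε F := by
  rw [isOutForest_iff] at hf ⊢
  exact ⟨fun p hp => hf.1 p (h hp), inDeg1_subset h hf.2.1, noCyc_subset h hf.2.2⟩

lemma rch_cases_tail {F : Finset (Fin n × Fin n)} {i j : Fin n} (h : Rch F j i) :
    i = j ∨ ∃ l, Rch F j l ∧ (l, i) ∈ F :=
  Relation.ReflTransGen.cases_tail h

lemma rch_root {F : Finset (Fin n × Fin n)} {i j : Fin n} (h : Rch F i j)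
    (hr : IsRoot F j) : i = j := by
  rcases rch_cases_tail h with h' | ⟨l, _, hl⟩
  · exact h'.symm
  · exact absurd hl (hr l)

lemma noLoop {F : Finset (Fin n × Fin n)} (hc : NoCyc F) (v : Fin n) :
    (v, v) ∉ F := fun hm => hc v (Relation.TransGen.single hm)

/-- If `b` is not reachable from `c`, any path to `b` avoids arcs into `c`. -/
lemma rch_erase {F : Finset (Fin n × Fin n)} {a b c u : Fin n}
    (h : Rch F a b) (hc : ¬ Rch F c b) : Rch (F.erase (u, c)) a b := by
  induction h using Relation.ReflTransGen.head_induction_on with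
  | refl => exact Relation.ReflTransGen.refl
  | head harc hrest ih =>
      rename_i x y
      by_cases hxy : (x, y) = (u, c)
      · refine absurd ?_ hc
        obtain ⟨rfl, rfl⟩ := Prod.ext_iff.mp hxy
        exact hrest
      · exact Relation.ReflTransGen.head (Finset.mem_erase.mpr ⟨hxy, harc⟩) ih

/-- Ancestors of a vertex form a chain. -/
lemma rch_chain {F : Finset (Fin n × Fin n)} (hdeg : InDeg1 F) {a c : Fin n}
    (hac : Rch F a c) : ∀ {b}, Rch F b c → Rch F a b ∨ Rch F b a := by
  induction hac with
  | refl =>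
      intro b hbc
      exact Or.inr hbc
  | @tail x y hax harc ih =>
      intro b hbc
      rcases rch_cases_tail hbc with h | ⟨l, hbl, hl⟩
      · subst h
        exact Or.inl (hax.tail harc)
      · have : l = x := hdeg l x y hl harc
        subst this
        exact ih hbl

/-- Decompose a path in `insert (u,v) F`. -/
lemma rch_insert_snd {F : Finset (Fin n × Fin n)} {u v a b : Fin n}
    (h : Rch (insert (u, v) F) a b) : Rch F a b ∨ Rch F v b := by
  induction h using Relation.ReflTransGen.head_induction_on with
  | refl => exact Or.inl Relation.ReflTransGen.refl
  | head harc hrest ih =>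
      rcases Finset.mem_insert.mp harc with hxy | hxy
      · obtain ⟨rfl, rfl⟩ := Prod.ext_iff.mp hxy
        rcases ih with ih | ih
        · exact Or.inr ih
        · exact Or.inr ih
      · rcases ih with ih | ih
        · exact Or.inl (Relation.ReflTransGen.head hxy ih)
        · exact Or.inr ih

lemma rch_insert_cases {F : Finset (Fin n × Fin n)} {u v a b : Fin n}
    (h : Rch (insert (u, v) F) a b) : Rch F a b ∨ (Rch F a u ∧ Rch F v b) := by
  induction h using Relation.ReflTransGen.head_induction_on with
  | refl => exact Or.inl Relation.ReflTransGen.refl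
  | head harc hrest ih =>
      rcases Finset.mem_insert.mp harc with hxy | hxy
      · obtain ⟨rfl, rfl⟩ := Prod.ext_iff.mp hxy
        refine Or.inr ⟨Relation.ReflTransGen.refl, ?_⟩
        rcases rch_insert_snd hrest with h1 | h1
        · exact h1
        · exact h1
      · rcases ih with ih | ⟨ih1, ih2⟩
        · exact Or.inl (Relation.ReflTransGen.head hxy ih)
        · exact Or.inr ⟨Relation.ReflTransGen.head hxy ih1, ih2⟩

lemma noCyc_insert {F : Finset (Fin n × Fin n)} {u v : Fin n} (hc : NoCyc F)
    (h : ¬ Rch F v u) : NoCyc (insert (u, v) F) := by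
  intro x hx
  rw [Relation.TransGen.head'_iff] at hx
  obtain ⟨y, hxy, hyx⟩ := hx
  rcases Finset.mem_insert.mp hxy with hxy | hxy
  · obtain ⟨rfl, rfl⟩ := Prod.ext_iff.mp hxy
    rcases rch_insert_cases hyx with h1 | ⟨h1, _⟩ <;> exact h h1
  · rcases rch_insert_cases hyx with h1 | ⟨h1, h2⟩
    · exact hc x (Relation.TransGen.head' hxy h1)
    · exact h ((h2.tail hxy).trans h1)

end AgaevChebotarev

namespace AgaevChebotarev

open Finset

variable {n : ℕ} (ε : Fin n → Fin n → ℝ)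

noncomputable def sigmaW' {n : ℕ} (ε : Fin n → Fin n → ℝ) (k : ℕ) : ℝ :=
  ∑ᶠ F ∈ {F : Finset (Fin n × Fin n) | IsOutForest ε F ∧ F.card = k}, forestWeight ε F

open scoped Classical in
noncomputable def FF (k : ℕ) : Finset (Finset (Fin n × Fin n)) :=
  univ.filter (fun F => IsOutForest ε F ∧ F.card = k)

open scoped Classical in
noncomputable def QS (k : ℕ) (i j : Fin n) : Finset (Finset (Fin n × Fin n)) :=
  univ.filter (fun F => IsOutForest ε F ∧ F.card = k ∧ IsRoot F j ∧ Rch F j i)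

variable {ε}

lemma mem_FF {k : ℕ} {F : Finset (Fin n × Fin n)} :
    F ∈ FF ε k ↔ IsOutForest ε F ∧ F.card = k := by
  classical
  simp [FF]

lemma mem_QS {k : ℕ} {i j : Fin n} {F : Finset (Fin n × Fin n)} :
    F ∈ QS ε k i j ↔ IsOutForest ε F ∧ F.card = k ∧ IsRoot F j ∧ Rch F j i := by
  classical
  simp [QS]

lemma sigmaW'_eq (k : ℕ) : sigmaW' ε k = ∑ F ∈ FF ε k, forestWeight ε F := by
  classical
  rw [sigmaW', ← finsum_mem_coe_finset]
  congr 1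
  ext F
  simp [FF]

lemma empty_isOutForest : IsOutForest ε (∅ : Finset (Fin n × Fin n)) := by
  rw [isOutForest_iff]
  refine ⟨by simp, fun u u' v h => absurd h (Finset.notMem_empty _), fun v hv => ?_⟩
  rw [Relation.TransGen.head'_iff] at hv
  obtain ⟨y, h, _⟩ := hv
  exact absurd h (Finset.notMem_empty _)

lemma bddAbove_cards :
    BddAbove {k | ∃ F : Finset (Fin n × Fin n), IsOutForest ε F ∧ F.card = k} := by
  refine ⟨Fintype.card (Fin n × Fin n), ?_⟩
  rintro k ⟨F, _, rfl⟩
  simpa using F.card_le_univ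

lemma w_pos {F : Finset (Fin n × Fin n)} (hf : IsOutForest ε F) : 0 < forestWeight ε F :=
  Finset.prod_pos (fun p hp => hf.1 p hp)

lemma w_insert {F : Finset (Fin n × Fin n)} {u v : Fin n} (h : (u, v) ∉ F) :
    forestWeight ε (insert (u, v) F) = ε u v * forestWeight ε F :=
  Finset.prod_insert h

open scoped Classical in
noncomputable def inArc (F : Finset (Fin n × Fin n)) (i : Fin n) : Fin n :=
  if h : ∃ u, (u, i) ∈ F then h.choose else i

lemma inArc_eq {F : Finset (Fin n × Fin n)} {u i : Fin n} (hdeg : InDeg1 F)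
    (h : (u, i) ∈ F) : inArc F i = u := by
  classical
  rw [inArc, dif_pos ⟨u, h⟩]
  exact hdeg _ _ _ (Exists.choose_spec (⟨u, h⟩ : ∃ u, (u, i) ∈ F)) h

lemma not_rch_no_inarc {F : Finset (Fin n × Fin n)} {i j : Fin n}
    (h : ∀ u, (u, i) ∉ F) (hij : i ≠ j) : ¬ Rch F j i := by
  intro hr
  rcases rch_cases_tail hr with h' | ⟨l, _, hl⟩
  · exact hij h'
  · exact h l hl

lemma not_rch_of {F : Finset (Fin n × Fin n)} {i j l : Fin n} (hdeg : InDeg1 F)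
    (hroot : IsRoot F j) (hjl : Rch F j l) (hji : ¬ Rch F j i) : ¬ Rch F i l := by
  intro hil
  rcases rch_chain hdeg hjl hil with h | h
  · exact hji h
  · have := rch_root h hroot
    subst this
    exact hji Relation.ReflTransGen.refl

/-- In a forest with a path `j →* i`, `i ≠ j`, erasing the in-arc `(l,i)` of `i`
keeps `j →* l`. -/
lemma rch_erase_inarc {F : Finset (Fin n × Fin n)} {i j l : Fin n}
    (hdeg : InDeg1 F) (hcyc : NoCyc F) (hl : (l, i) ∈ F) (h : Rch F j i) (hij : i ≠ j) :
    Rch (F.erase (l, i)) j l := by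
  rcases rch_cases_tail h with h' | ⟨c, hjc, hc⟩
  · exact absurd h' hij
  · have : c = l := hdeg c l i hc hl
    subst this
    refine rch_erase hjc ?_
    intro hic
    exact hcyc i (Relation.TransGen.tail' hic hl)

end AgaevChebotarev
namespace AgaevChebotarev

open Finset

variable {n : ℕ} {ε : Fin n → Fin n → ℝ}

lemma inArc_mem {F : Finset (Fin n × Fin n)} {i : Fin n} (h : ∃ u, (u, i) ∈ F) :
    (inArc F i, i) ∈ F := by
  classical
  rw [inArc, dif_pos h]
  exact h.choose_spec

lemma isRoot_subset {F F' : Finset (Fin n × Fin n)} {j : Fin n} (h : F ⊆ F')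
    (hr : IsRoot F' j) : IsRoot F j := fun u hu => hr u (h hu)

lemma isRoot_insert {F : Finset (Fin n × Fin n)} {j l i : Fin n} (hr : IsRoot F j)
    (hji : j ≠ i) : IsRoot (insert (l, i) F) j := by
  intro u hu
  rcases Finset.mem_insert.mp hu with h | h
  · simp only [Prod.mk.injEq] at h
    exact hji h.2
  · exact hr u h

lemma isRoot_erase_inarc {F : Finset (Fin n × Fin n)} {l i : Fin n} (hdeg : InDeg1 F)
    (hl : (l, i) ∈ F) : IsRoot (F.erase (l, i)) i := by
  intro u hu
  obtain ⟨hne, hmem⟩ := Finset.mem_erase.mp hu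
  exact hne (by rw [hdeg u l i hmem hl])

lemma inDeg1_insert {F : Finset (Fin n × Fin n)} {l i : Fin n} (hdeg : InDeg1 F)
    (hroot : IsRoot F i) : InDeg1 (insert (l, i) F) := by
  intro u u' v h1 h2
  rcases Finset.mem_insert.mp h1 with h1' | h1' <;> rcases Finset.mem_insert.mp h2 with h2' | h2'
  · simp only [Prod.mk.injEq] at h1' h2'
    rw [h1'.1, h2'.1]
  · simp only [Prod.mk.injEq] at h1'
    obtain ⟨rfl, rfl⟩ := h1'
    exact absurd h2' (hroot u')
  · simp only [Prod.mk.injEq] at h2'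
    obtain ⟨rfl, rfl⟩ := h2'
    exact absurd h1' (hroot u)
  · exact hdeg u u' v h1' h2'

lemma isOutForest_insert {F : Finset (Fin n × Fin n)} {l i : Fin n}
    (hf : IsOutForest ε F) (hpos : 0 < ε l i) (hroot : IsRoot F i) (hnr : ¬ Rch F i l) :
    IsOutForest ε (insert (l, i) F) := by
  rw [isOutForest_iff] at hf ⊢
  obtain ⟨hp, hdeg, hcyc⟩ := hf
  refine ⟨?_, inDeg1_insert hdeg hroot, noCyc_insert hcyc hnr⟩
  intro p hp'
  rcases Finset.mem_insert.mp hp' with h | h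
  · subst h
    exact hpos
  · exact hp p h

lemma w_erase {F : Finset (Fin n × Fin n)} {u v : Fin n} (h : (u, v) ∈ F) :
    forestWeight ε F = ε u v * forestWeight ε (F.erase (u, v)) :=
  (Finset.mul_prod_erase F _ h).symm

lemma forest_parts {F : Finset (Fin n × Fin n)} (hf : IsOutForest ε F) :
    InDeg1 F ∧ NoCyc F := ⟨(isOutForest_iff.mp hf).2.1, (isOutForest_iff.mp hf).2.2⟩

/-- Restrict a weighted sum over `l` to the positive-weight arcs. -/
lemma sum_erase_eq_sum_filter (hnonneg : ∀ a b, 0 ≤ ε a b) (i : Fin n) (g : Fin n → ℝ) :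
    ∑ l ∈ Finset.univ.erase i, ε l i * g l
      = ∑ l ∈ (Finset.univ.erase i).filter (fun l => 0 < ε l i), ε l i * g l := by
  classical
  refine (Finset.sum_filter_of_ne ?_).symm
  intro l _ hne
  rcases lt_or_eq_of_le (hnonneg l i) with h | h
  · exact h
  · exact absurd (by rw [← h, zero_mul]) hne

end AgaevChebotarev
namespace AgaevChebotarev

open Finset

variable {n : ℕ} {ε : Fin n → Fin n → ℝ}

open scoped Classical

variable (ε) in
noncomputable def Wset (k : ℕ) (j l : Fin n) : Finset (Finset (Fin n × Fin n)) :=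
  (FF ε k).filter (fun F => IsRoot F j ∧ ¬ Rch F j l)

lemma mem_Wset {k : ℕ} {j l : Fin n} {F : Finset (Fin n × Fin n)} :
    F ∈ Wset ε k j l ↔ IsOutForest ε F ∧ F.card = k ∧ IsRoot F j ∧ ¬ Rch F j l := by
  simp [Wset, mem_FF, and_assoc]

lemma bij_diag (k : ℕ) (j : Fin n) :
    ∑ F' ∈ (FF ε (k+1)).filter (fun F' => ¬ IsRoot F' j), forestWeight ε F'
      = ∑ p ∈ ((univ.erase j).filter (fun l => 0 < ε l j)).sigma (fun l => Wset ε k j l),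
          ε p.1 j * forestWeight ε p.2 := by
  refine Finset.sum_nbij' (fun F' => ⟨inArc F' j, F'.erase (inArc F' j, j)⟩)
    (fun p => insert (p.1, j) p.2) ?_ ?_ ?_ ?_ ?_
  · -- forward maps into the sigma set
    intro F' hF'
    obtain ⟨hFF, hnr⟩ := Finset.mem_filter.mp hF'
    obtain ⟨hf, hcard⟩ := mem_FF.mp hFF
    obtain ⟨hdeg, hcyc⟩ := forest_parts hf
    have hex : ∃ u, (u, j) ∈ F' := by
      by_contra hno
      push_neg at hno
      exact hnr (fun u => hno u)
    have hmem : (inArc F' j, j) ∈ F' := inArc_mem hex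
    set l := inArc F' j with hl
    have hlj : l ≠ j := fun h => noLoop hcyc j (h ▸ hmem)
    refine Finset.mem_sigma.mpr ⟨Finset.mem_filter.mpr ⟨Finset.mem_erase.mpr ⟨hlj, mem_univ l⟩,
      hf.1 _ hmem⟩, mem_Wset.mpr ⟨isOutForest_subset (Finset.erase_subset _ _) hf, ?_, ?_, ?_⟩⟩
    · rw [Finset.card_erase_of_mem hmem, hcard]
      omega
    · exact isRoot_erase_inarc hdeg hmem
    · intro hr
      exact hcyc j (Relation.TransGen.tail'
        (rch_mono (Finset.erase_subset _ _) hr) hmem)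
  · -- backward maps into the lhs set
    rintro ⟨l, F⟩ hp
    obtain ⟨hlmem, hFmem⟩ := Finset.mem_sigma.mp hp
    obtain ⟨hlj', hpos⟩ := Finset.mem_filter.mp hlmem
    have hlj : l ≠ j := (Finset.mem_erase.mp hlj').1
    obtain ⟨hf, hcard, hroot, hnr⟩ := mem_Wset.mp hFmem
    have hnotmem : (l, j) ∉ F := hroot l
    refine Finset.mem_filter.mpr ⟨mem_FF.mpr ⟨isOutForest_insert hf hpos hroot hnr, ?_⟩, ?_⟩
    · rw [Finset.card_insert_of_notMem hnotmem, hcard]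
    · intro hroot'
      exact hroot' l (Finset.mem_insert_self _ _)
  · -- left inverse
    intro F' hF'
    obtain ⟨hFF, hnr⟩ := Finset.mem_filter.mp hF'
    have hex : ∃ u, (u, j) ∈ F' := by
      by_contra hno
      push_neg at hno
      exact hnr (fun u => hno u)
    simp [Finset.insert_erase (inArc_mem hex)]
  · -- right inverse
    rintro ⟨l, F⟩ hp
    obtain ⟨hlmem, hFmem⟩ := Finset.mem_sigma.mp hp
    obtain ⟨hf, hcard, hroot, hnr⟩ := mem_Wset.mp hFmem
    obtain ⟨hlj', hpos⟩ := Finset.mem_filter.mp hlmem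
    have hlj : l ≠ j := (Finset.mem_erase.mp hlj').1
    have hf' : IsOutForest ε (insert (l, j) F) := isOutForest_insert hf hpos hroot hnr
    have h1 : inArc (insert (l, j) F) j = l :=
      inArc_eq (forest_parts hf').1 (Finset.mem_insert_self _ _)
    simp [h1, Finset.erase_insert (hroot l)]
  · -- weights
    intro F' hF'
    obtain ⟨hFF, hnr⟩ := Finset.mem_filter.mp hF'
    have hex : ∃ u, (u, j) ∈ F' := by
      by_contra hno
      push_neg at hno
      exact hnr (fun u => hno u)
    exact (Finset.mul_prod_erase F' _ (inArc_mem hex)).symm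

end AgaevChebotarev
namespace AgaevChebotarev

open Finset

variable {n : ℕ} {ε : Fin n → Fin n → ℝ}

open scoped Classical

variable (ε) in
noncomputable def Aset1 (k : ℕ) (i j l : Fin n) : Finset (Finset (Fin n × Fin n)) :=
  (FF ε k).filter (fun F => IsRoot F j ∧ Rch F j l ∧ ¬ Rch F j i ∧ IsRoot F i)

variable (ε) in
noncomputable def Aset2 (k : ℕ) (i j l : Fin n) : Finset (Finset (Fin n × Fin n)) :=
  (FF ε k).filter (fun F => IsRoot F j ∧ Rch F j l ∧ ¬ Rch F j i ∧ ¬ IsRoot F i)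

variable (ε) in
noncomputable def Bset (k : ℕ) (i j l : Fin n) : Finset (Finset (Fin n × Fin n)) :=
  (FF ε k).filter (fun F => IsRoot F j ∧ Rch F j i ∧ ¬ Rch F j l)

lemma mem_Aset1 {k : ℕ} {i j l : Fin n} {F : Finset (Fin n × Fin n)} :
    F ∈ Aset1 ε k i j l ↔ IsOutForest ε F ∧ F.card = k ∧ IsRoot F j ∧ Rch F j l ∧
      ¬ Rch F j i ∧ IsRoot F i := by
  simp [Aset1, mem_FF, and_assoc]

lemma mem_Aset2 {k : ℕ} {i j l : Fin n} {F : Finset (Fin n × Fin n)} :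
    F ∈ Aset2 ε k i j l ↔ IsOutForest ε F ∧ F.card = k ∧ IsRoot F j ∧ Rch F j l ∧
      ¬ Rch F j i ∧ ¬ IsRoot F i := by
  simp [Aset2, mem_FF, and_assoc]

lemma mem_Bset {k : ℕ} {i j l : Fin n} {F : Finset (Fin n × Fin n)} :
    F ∈ Bset ε k i j l ↔ IsOutForest ε F ∧ F.card = k ∧ IsRoot F j ∧ Rch F j i ∧
      ¬ Rch F j l := by
  simp [Bset, mem_FF, and_assoc]

lemma bij_offdiag (k : ℕ) {i j : Fin n} (hij : i ≠ j) :
    ∑ F' ∈ QS ε (k+1) i j, forestWeight ε F'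
      = ∑ p ∈ ((univ.erase i).filter (fun l => 0 < ε l i)).sigma (fun l => Aset1 ε k i j l),
          ε p.1 i * forestWeight ε p.2 := by
  refine Finset.sum_nbij' (fun F' => ⟨inArc F' i, F'.erase (inArc F' i, i)⟩)
    (fun p => insert (p.1, i) p.2) ?_ ?_ ?_ ?_ ?_
  · intro F' hF'
    obtain ⟨hf, hcard, hrootj, hrch⟩ := mem_QS.mp hF'
    obtain ⟨hdeg, hcyc⟩ := forest_parts hf
    obtain ⟨l0, hjl0, hmem0⟩ := (rch_cases_tail hrch).resolve_left hij
    have hl : inArc F' i = l0 := inArc_eq hdeg hmem0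
    rw [hl]
    have hli : l0 ≠ i := fun h => noLoop hcyc i (h ▸ hmem0)
    refine Finset.mem_sigma.mpr ⟨Finset.mem_filter.mpr ⟨Finset.mem_erase.mpr ⟨hli, mem_univ _⟩,
      hf.1 _ hmem0⟩, mem_Aset1.mpr ⟨isOutForest_subset (Finset.erase_subset _ _) hf, ?_, ?_, ?_, ?_, ?_⟩⟩
    · rw [Finset.card_erase_of_mem hmem0, hcard]
      omega
    · exact isRoot_subset (Finset.erase_subset _ _) hrootj
    · exact rch_erase_inarc hdeg hcyc hmem0 hrch hij
    · exact not_rch_no_inarc (isRoot_erase_inarc hdeg hmem0) hij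
    · exact isRoot_erase_inarc hdeg hmem0
  · rintro ⟨l, F⟩ hp
    dsimp only at hp ⊢
    obtain ⟨hlmem, hFmem⟩ := Finset.mem_sigma.mp hp
    obtain ⟨_, hpos⟩ := Finset.mem_filter.mp hlmem
    obtain ⟨hf, hcard, hrootj, hjl, hnji, hrooti⟩ := mem_Aset1.mp hFmem
    obtain ⟨hdeg, hcyc⟩ := forest_parts hf
    have hnil : ¬ Rch F i l := not_rch_of hdeg hrootj hjl hnji
    refine mem_QS.mpr ⟨isOutForest_insert hf hpos hrooti hnil, ?_,
      isRoot_insert hrootj (Ne.symm hij), ?_⟩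
    · rw [Finset.card_insert_of_notMem (hrooti l), hcard]
    · exact (rch_mono (Finset.subset_insert _ _) hjl).tail (Finset.mem_insert_self _ _)
  · intro F' hF'
    dsimp only
    obtain ⟨hf, hcard, hrootj, hrch⟩ := mem_QS.mp hF'
    obtain ⟨hdeg, hcyc⟩ := forest_parts hf
    obtain ⟨l0, hjl0, hmem0⟩ := (rch_cases_tail hrch).resolve_left hij
    have hl : inArc F' i = l0 := inArc_eq hdeg hmem0
    simp [hl, Finset.insert_erase hmem0]
  · rintro ⟨l, F⟩ hp
    dsimp only at hp ⊢
    obtain ⟨hlmem, hFmem⟩ := Finset.mem_sigma.mp hp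
    obtain ⟨_, hpos⟩ := Finset.mem_filter.mp hlmem
    obtain ⟨hf, hcard, hrootj, hjl, hnji, hrooti⟩ := mem_Aset1.mp hFmem
    obtain ⟨hdeg, hcyc⟩ := forest_parts hf
    have hnil : ¬ Rch F i l := not_rch_of hdeg hrootj hjl hnji
    have hf' : IsOutForest ε (insert (l, i) F) := isOutForest_insert hf hpos hrooti hnil
    have h1 : inArc (insert (l, i) F) i = l :=
      inArc_eq (forest_parts hf').1 (Finset.mem_insert_self _ _)
    simp [h1, Finset.erase_insert (hrooti l)]
  · intro F' hF'
    dsimp only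
    obtain ⟨hf, hcard, hrootj, hrch⟩ := mem_QS.mp hF'
    obtain ⟨hdeg, hcyc⟩ := forest_parts hf
    obtain ⟨l0, hjl0, hmem0⟩ := (rch_cases_tail hrch).resolve_left hij
    have hl : inArc F' i = l0 := inArc_eq hdeg hmem0
    rw [hl]
    exact (Finset.mul_prod_erase F' _ hmem0).symm

lemma bij_cancel (k : ℕ) {i j : Fin n} (hij : i ≠ j) :
    ∑ p ∈ ((univ.erase i).filter (fun l => 0 < ε l i)).sigma (fun l => Aset2 ε k i j l),
          ε p.1 i * forestWeight ε p.2
      = ∑ p ∈ ((univ.erase i).filter (fun l => 0 < ε l i)).sigma (fun l => Bset ε k i j l),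
          ε p.1 i * forestWeight ε p.2 := by
  refine Finset.sum_nbij'
    (fun p => ⟨inArc p.2 i, insert (p.1, i) (p.2.erase (inArc p.2 i, i))⟩)
    (fun p => ⟨inArc p.2 i, insert (p.1, i) (p.2.erase (inArc p.2 i, i))⟩) ?_ ?_ ?_ ?_ ?_
  · rintro ⟨l, F⟩ hp
    dsimp only at hp ⊢
    obtain ⟨hlmem, hFmem⟩ := Finset.mem_sigma.mp hp
    obtain ⟨hlr, hposl⟩ := Finset.mem_filter.mp hlmem
    obtain ⟨hf, hcard, hrootj, hjl, hnji, hnrooti⟩ := mem_Aset2.mp hFmem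
    obtain ⟨hdeg, hcyc⟩ := forest_parts hf
    have hex : ∃ u, (u, i) ∈ F := by
      by_contra hno
      push_neg at hno
      exact hnrooti (fun u => hno u)
    have hmemu : (inArc F i, i) ∈ F := inArc_mem hex
    set u := inArc F i with hu
    have hui : u ≠ i := fun h => noLoop hcyc i (h ▸ hmemu)
    have hErooti : IsRoot (F.erase (u, i)) i := isRoot_erase_inarc hdeg hmemu
    have hEf : IsOutForest ε (F.erase (u, i)) := isOutForest_subset (Finset.erase_subset _ _) hf
    have hnil : ¬ Rch F i l := not_rch_of hdeg hrootj hjl hnji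
    have hnilE : ¬ Rch (F.erase (u, i)) i l :=
      fun h => hnil (rch_mono (Finset.erase_subset _ _) h)
    have hjlE : Rch (F.erase (u, i)) j l := rch_erase hjl hnil
    have hft : IsOutForest ε (insert (l, i) (F.erase (u, i))) :=
      isOutForest_insert hEf hposl hErooti hnilE
    refine Finset.mem_sigma.mpr ⟨Finset.mem_filter.mpr ⟨Finset.mem_erase.mpr ⟨hui, mem_univ _⟩,
      hf.1 _ hmemu⟩, mem_Bset.mpr ⟨hft, ?_, ?_, ?_, ?_⟩⟩
    · rw [Finset.card_insert_of_notMem (hErooti l), Finset.card_erase_of_mem hmemu, hcard]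
      have : 0 < k := hcard ▸ Finset.card_pos.mpr ⟨_, hmemu⟩
      omega
    · exact isRoot_insert (isRoot_subset (Finset.erase_subset _ _) hrootj) (Ne.symm hij)
    · exact (rch_mono (Finset.subset_insert _ _) hjlE).tail (Finset.mem_insert_self _ _)
    · intro hr
      rcases rch_insert_cases hr with h1 | ⟨_, h2⟩
      · exact hnji ((rch_mono (Finset.erase_subset _ _) h1).tail hmemu)
      · exact hcyc i (Relation.TransGen.tail'
          (rch_mono (Finset.erase_subset _ _) h2) hmemu)
  · rintro ⟨u, F'⟩ hp
    dsimp only at hp ⊢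
    obtain ⟨humem, hFmem⟩ := Finset.mem_sigma.mp hp
    obtain ⟨hur, hposu⟩ := Finset.mem_filter.mp humem
    obtain ⟨hf, hcard, hrootj, hji', hnju⟩ := mem_Bset.mp hFmem
    obtain ⟨hdeg, hcyc⟩ := forest_parts hf
    obtain ⟨l0, hjl0, hmem0⟩ := (rch_cases_tail hji').resolve_left hij
    have hl : inArc F' i = l0 := inArc_eq hdeg hmem0
    rw [hl]
    have hli : l0 ≠ i := fun h => noLoop hcyc i (h ▸ hmem0)
    have hErooti : IsRoot (F'.erase (l0, i)) i := isRoot_erase_inarc hdeg hmem0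
    have hEf : IsOutForest ε (F'.erase (l0, i)) :=
      isOutForest_subset (Finset.erase_subset _ _) hf
    have hjl0E : Rch (F'.erase (l0, i)) j l0 := rch_erase_inarc hdeg hcyc hmem0 hji' hij
    have hniuE : ¬ Rch (F'.erase (l0, i)) i u := by
      intro h
      exact hnju (hji'.trans (rch_mono (Finset.erase_subset _ _) h))
    have hft : IsOutForest ε (insert (u, i) (F'.erase (l0, i))) :=
      isOutForest_insert hEf hposu hErooti hniuE
    refine Finset.mem_sigma.mpr ⟨Finset.mem_filter.mpr ⟨Finset.mem_erase.mpr ⟨hli, mem_univ _⟩,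
      hf.1 _ hmem0⟩, mem_Aset2.mpr ⟨hft, ?_, ?_, ?_, ?_, ?_⟩⟩
    · rw [Finset.card_insert_of_notMem (hErooti u), Finset.card_erase_of_mem hmem0, hcard]
      have : 0 < k := hcard ▸ Finset.card_pos.mpr ⟨_, hmem0⟩
      omega
    · exact isRoot_insert (isRoot_subset (Finset.erase_subset _ _) hrootj) (Ne.symm hij)
    · exact rch_mono (Finset.subset_insert _ _) hjl0E
    · intro hr
      rcases rch_cases_tail hr with h | ⟨c, hjc, hcmem⟩
      · exact hij h
      · have hcu : c = u := (forest_parts hft).1 c u i hcmem (Finset.mem_insert_self _ _)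
        subst hcu
        rcases rch_insert_cases hjc with h1 | ⟨_, h2⟩
        · exact hnju (rch_mono (Finset.erase_subset _ _) h1)
        · exact hniuE h2
    · intro hr
      exact hr u (Finset.mem_insert_self _ _)
  · -- left inverse
    rintro ⟨l, F⟩ hp
    obtain ⟨hlmem, hFmem⟩ := Finset.mem_sigma.mp hp
    obtain ⟨hlr, hposl⟩ := Finset.mem_filter.mp hlmem
    obtain ⟨hf, hcard, hrootj, hjl, hnji, hnrooti⟩ := mem_Aset2.mp hFmem
    obtain ⟨hdeg, hcyc⟩ := forest_parts hf
    have hex : ∃ u, (u, i) ∈ F := by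
      by_contra hno
      push_neg at hno
      exact hnrooti (fun u => hno u)
    have hmemu : (inArc F i, i) ∈ F := inArc_mem hex
    set u := inArc F i with hu
    have hErooti : IsRoot (F.erase (u, i)) i := isRoot_erase_inarc hdeg hmemu
    have hEf : IsOutForest ε (F.erase (u, i)) := isOutForest_subset (Finset.erase_subset _ _) hf
    have hnil : ¬ Rch F i l := not_rch_of hdeg hrootj hjl hnji
    have hnilE : ¬ Rch (F.erase (u, i)) i l :=
      fun h => hnil (rch_mono (Finset.erase_subset _ _) h)
    have hft : IsOutForest ε (insert (l, i) (F.erase (u, i))) :=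
      isOutForest_insert hEf hposl hErooti hnilE
    have h1 : inArc (insert (l, i) (F.erase (u, i))) i = l :=
      inArc_eq (forest_parts hft).1 (Finset.mem_insert_self _ _)
    simp only [h1, Finset.erase_insert (hErooti l), Finset.insert_erase hmemu]
  · -- right inverse
    rintro ⟨u, F'⟩ hp
    obtain ⟨humem, hFmem⟩ := Finset.mem_sigma.mp hp
    obtain ⟨hur, hposu⟩ := Finset.mem_filter.mp humem
    obtain ⟨hf, hcard, hrootj, hji', hnju⟩ := mem_Bset.mp hFmem
    obtain ⟨hdeg, hcyc⟩ := forest_parts hf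
    obtain ⟨l0, hjl0, hmem0⟩ := (rch_cases_tail hji').resolve_left hij
    have hl : inArc F' i = l0 := inArc_eq hdeg hmem0
    have hErooti : IsRoot (F'.erase (l0, i)) i := isRoot_erase_inarc hdeg hmem0
    have hEf : IsOutForest ε (F'.erase (l0, i)) :=
      isOutForest_subset (Finset.erase_subset _ _) hf
    have hniuE : ¬ Rch (F'.erase (l0, i)) i u := by
      intro h
      exact hnju (hji'.trans (rch_mono (Finset.erase_subset _ _) h))
    have hft : IsOutForest ε (insert (u, i) (F'.erase (l0, i))) :=
      isOutForest_insert hEf hposu hErooti hniuE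
    have h1 : inArc (insert (u, i) (F'.erase (l0, i))) i = u :=
      inArc_eq (forest_parts hft).1 (Finset.mem_insert_self _ _)
    simp only [hl, h1, Finset.erase_insert (hErooti u), Finset.insert_erase hmem0]
  · -- weights
    rintro ⟨l, F⟩ hp
    obtain ⟨hlmem, hFmem⟩ := Finset.mem_sigma.mp hp
    obtain ⟨hlr, hposl⟩ := Finset.mem_filter.mp hlmem
    obtain ⟨hf, hcard, hrootj, hjl, hnji, hnrooti⟩ := mem_Aset2.mp hFmem
    obtain ⟨hdeg, hcyc⟩ := forest_parts hf
    have hex : ∃ u, (u, i) ∈ F := by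
      by_contra hno
      push_neg at hno
      exact hnrooti (fun u => hno u)
    have hmemu : (inArc F i, i) ∈ F := inArc_mem hex
    set u := inArc F i with hu
    have hErooti : IsRoot (F.erase (u, i)) i := isRoot_erase_inarc hdeg hmemu
    show ε l i * forestWeight ε F
        = ε u i * forestWeight ε (insert (l, i) (F.erase (u, i)))
    rw [w_insert (hErooti l), w_erase hmemu]
    ring

end AgaevChebotarev
namespace AgaevChebotarev

open Finset

variable {n : ℕ} {ε : Fin n → Fin n → ℝ}

open scoped Classical

theorem CA_entry (hnonneg : ∀ a b, 0 ≤ ε a b) (k : ℕ) (i j : Fin n) :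
    (∑ F ∈ QS ε (k+1) i j, forestWeight ε F)
      = (if i = j then ∑ F ∈ FF ε (k+1), forestWeight ε F else 0)
        + ∑ l ∈ univ.erase i, ε l i *
            ((∑ F ∈ QS ε k l j, forestWeight ε F) - (∑ F ∈ QS ε k i j, forestWeight ε F)) := by
  by_cases hij : i = j
  · subst hij
    rw [if_pos rfl]
    have ha : ∀ m, QS ε m i i = (FF ε m).filter (fun F => IsRoot F i) := by
      intro m
      ext F
      rw [mem_QS, Finset.mem_filter, mem_FF]
      constructor
      · rintro ⟨h1, h2, h3, _⟩
        exact ⟨⟨h1, h2⟩, h3⟩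
      · rintro ⟨⟨h1, h2⟩, h3⟩
        exact ⟨h1, h2, h3, Relation.ReflTransGen.refl⟩
    have hW : ∀ l, (∑ F ∈ QS ε k l i, forestWeight ε F)
        - (∑ F ∈ QS ε k i i, forestWeight ε F)
        = -(∑ F ∈ Wset ε k i l, forestWeight ε F) := by
      intro l
      have hql : QS ε k l i
          = ((FF ε k).filter (fun F => IsRoot F i)).filter (fun F => Rch F i l) := by
        ext F
        rw [mem_QS, Finset.mem_filter, Finset.mem_filter, mem_FF]
        tauto
      have hwl : ((FF ε k).filter (fun F => IsRoot F i)).filter (fun F => ¬ Rch F i l)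
          = Wset ε k i l := by
        rw [Wset, Finset.filter_filter]
      rw [ha, hql, ← Finset.sum_filter_add_sum_filter_not
        ((FF ε k).filter (fun F => IsRoot F i)) (fun F => Rch F i l) (forestWeight ε), hwl]
      ring
    have h1 : ∑ l ∈ univ.erase i, ε l i *
        ((∑ F ∈ QS ε k l i, forestWeight ε F) - (∑ F ∈ QS ε k i i, forestWeight ε F))
        = -(∑ l ∈ univ.erase i, ε l i * (∑ F ∈ Wset ε k i l, forestWeight ε F)) := by
      rw [← Finset.sum_neg_distrib]
      refine Finset.sum_congr rfl (fun l _ => ?_)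
      rw [hW l]
      ring
    have h2 : ∑ l ∈ univ.erase i, ε l i * (∑ F ∈ Wset ε k i l, forestWeight ε F)
        = ∑ F' ∈ (FF ε (k+1)).filter (fun F' => ¬ IsRoot F' i), forestWeight ε F' := by
      rw [sum_erase_eq_sum_filter hnonneg]
      rw [Finset.sum_congr rfl (fun l _ => Finset.mul_sum _ _ _)]
      rw [Finset.sum_sigma']
      exact (bij_diag k i).symm
    have h3 := Finset.sum_filter_add_sum_filter_not (FF ε (k+1))
      (fun F => IsRoot F i) (forestWeight ε)
    rw [ha, h1, h2]
    linarith
  · rw [if_neg hij, zero_add]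
    have hsplit : ∀ l, (∑ F ∈ QS ε k l j, forestWeight ε F)
        - (∑ F ∈ QS ε k i j, forestWeight ε F)
        = (∑ F ∈ Aset1 ε k i j l, forestWeight ε F)
          + (∑ F ∈ Aset2 ε k i j l, forestWeight ε F)
          - (∑ F ∈ Bset ε k i j l, forestWeight ε F) := by
      intro l
      have hql : QS ε k l j
          = (FF ε k).filter (fun F => IsRoot F j ∧ Rch F j l) := by
        ext F
        rw [mem_QS, Finset.mem_filter, mem_FF]
        tauto
      have hqi : QS ε k i j
          = (FF ε k).filter (fun F => IsRoot F j ∧ Rch F j i) := by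
        ext F
        rw [mem_QS, Finset.mem_filter, mem_FF]
        tauto
      have e1 : ∑ F ∈ QS ε k l j, forestWeight ε F
          = (∑ F ∈ (FF ε k).filter (fun F => (IsRoot F j ∧ Rch F j l) ∧ Rch F j i),
              forestWeight ε F)
            + (∑ F ∈ (FF ε k).filter (fun F => (IsRoot F j ∧ Rch F j l) ∧ ¬ Rch F j i),
              forestWeight ε F) := by
        have base := Finset.sum_filter_add_sum_filter_not
          ((FF ε k).filter (fun F => IsRoot F j ∧ Rch F j l)) (fun F => Rch F j i)
          (forestWeight ε)
        have c1 : ((FF ε k).filter (fun F => IsRoot F j ∧ Rch F j l)).filter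
            (fun F => Rch F j i)
            = (FF ε k).filter (fun F => (IsRoot F j ∧ Rch F j l) ∧ Rch F j i) :=
          Finset.filter_filter _ _ _
        have c2 : ((FF ε k).filter (fun F => IsRoot F j ∧ Rch F j l)).filter
            (fun F => ¬ Rch F j i)
            = (FF ε k).filter (fun F => (IsRoot F j ∧ Rch F j l) ∧ ¬ Rch F j i) :=
          Finset.filter_filter _ _ _
        rw [hql, ← c1, ← c2]
        exact base.symm
      have e2 : ∑ F ∈ (FF ε k).filter (fun F => (IsRoot F j ∧ Rch F j l) ∧ ¬ Rch F j i),
            forestWeight ε F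
          = (∑ F ∈ Aset1 ε k i j l, forestWeight ε F)
            + (∑ F ∈ Aset2 ε k i j l, forestWeight ε F) := by
        have hA1 : ((FF ε k).filter
              (fun F => (IsRoot F j ∧ Rch F j l) ∧ ¬ Rch F j i)).filter
              (fun F => IsRoot F i) = Aset1 ε k i j l := by
          rw [Finset.filter_filter, Aset1]
          apply Finset.filter_congr
          intro F _
          tauto
        have hA2 : ((FF ε k).filter
              (fun F => (IsRoot F j ∧ Rch F j l) ∧ ¬ Rch F j i)).filter
              (fun F => ¬ IsRoot F i) = Aset2 ε k i j l := by
          rw [Finset.filter_filter, Aset2]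
          apply Finset.filter_congr
          intro F _
          tauto
        rw [← hA1, ← hA2]
        exact (Finset.sum_filter_add_sum_filter_not
          ((FF ε k).filter (fun F => (IsRoot F j ∧ Rch F j l) ∧ ¬ Rch F j i))
          (fun F => IsRoot F i) (forestWeight ε)).symm
      have e3 : ∑ F ∈ QS ε k i j, forestWeight ε F
          = (∑ F ∈ (FF ε k).filter (fun F => (IsRoot F j ∧ Rch F j l) ∧ Rch F j i),
              forestWeight ε F)
            + (∑ F ∈ Bset ε k i j l, forestWeight ε F) := by
        have hC : ((FF ε k).filter (fun F => IsRoot F j ∧ Rch F j i)).filter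
              (fun F => Rch F j l)
            = (FF ε k).filter (fun F => (IsRoot F j ∧ Rch F j l) ∧ Rch F j i) := by
          rw [Finset.filter_filter]
          apply Finset.filter_congr
          intro F _
          tauto
        have hB : ((FF ε k).filter (fun F => IsRoot F j ∧ Rch F j i)).filter
              (fun F => ¬ Rch F j l) = Bset ε k i j l := by
          rw [Finset.filter_filter, Bset]
          apply Finset.filter_congr
          intro F _
          tauto
        rw [hqi, ← Finset.sum_filter_add_sum_filter_not
          (((FF ε k)).filter (fun F => IsRoot F j ∧ Rch F j i)) (fun F => Rch F j l)
          (forestWeight ε), hC, hB]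
      rw [e1, e2, e3]
      ring
    have hsum : ∑ l ∈ univ.erase i, ε l i *
        ((∑ F ∈ QS ε k l j, forestWeight ε F) - (∑ F ∈ QS ε k i j, forestWeight ε F))
        = (∑ l ∈ univ.erase i, ε l i * (∑ F ∈ Aset1 ε k i j l, forestWeight ε F))
          + (∑ l ∈ univ.erase i, ε l i * (∑ F ∈ Aset2 ε k i j l, forestWeight ε F))
          - (∑ l ∈ univ.erase i, ε l i * (∑ F ∈ Bset ε k i j l, forestWeight ε F)) := by
      rw [← Finset.sum_add_distrib, ← Finset.sum_sub_distrib]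
      refine Finset.sum_congr rfl (fun l _ => ?_)
      rw [hsplit l]
      ring
    have hA1s : ∑ l ∈ univ.erase i, ε l i * (∑ F ∈ Aset1 ε k i j l, forestWeight ε F)
        = ∑ F ∈ QS ε (k+1) i j, forestWeight ε F := by
      rw [sum_erase_eq_sum_filter hnonneg]
      rw [Finset.sum_congr rfl (fun l _ => Finset.mul_sum _ _ _)]
      rw [Finset.sum_sigma']
      exact (bij_offdiag k hij).symm
    have hA2s : ∑ l ∈ univ.erase i, ε l i * (∑ F ∈ Aset2 ε k i j l, forestWeight ε F)
        = ∑ l ∈ univ.erase i, ε l i * (∑ F ∈ Bset ε k i j l, forestWeight ε F) := by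
      rw [sum_erase_eq_sum_filter hnonneg, sum_erase_eq_sum_filter hnonneg]
      rw [Finset.sum_congr rfl (fun l _ => Finset.mul_sum _ _ _),
        Finset.sum_congr rfl (fun l _ => Finset.mul_sum _ _ _)]
      rw [Finset.sum_sigma', Finset.sum_sigma']
      exact bij_cancel k hij
    rw [hsum, hA1s, hA2s]
    ring

end AgaevChebotarev
namespace AgaevChebotarev

open Finset Matrix

variable {n : ℕ} {ε : Fin n → Fin n → ℝ}

open scoped Classical

noncomputable def sigmaF (ε : Fin n → Fin n → ℝ) (k : ℕ) : ℝ :=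
  ∑ F ∈ FF ε k, forestWeight ε F

noncomputable def QM (ε : Fin n → Fin n → ℝ) (k : ℕ) : Matrix (Fin n) (Fin n) ℝ :=
  Matrix.of fun i j => ∑ F ∈ QS ε k i j, forestWeight ε F

lemma rch_empty {a b : Fin n} (h : Rch (∅ : Finset (Fin n × Fin n)) a b) : a = b := by
  rcases rch_cases_tail h with h' | ⟨l, _, hl⟩
  · exact h'.symm
  · exact absurd hl (Finset.notMem_empty _)

lemma FF_zero : FF ε 0 = {∅} := by
  ext F
  rw [mem_FF, Finset.mem_singleton]
  constructor
  · rintro ⟨_, hc⟩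
    exact Finset.card_eq_zero.mp hc
  · rintro rfl
    exact ⟨empty_isOutForest, Finset.card_empty⟩

lemma sigmaF_zero : sigmaF ε 0 = 1 := by
  rw [sigmaF, FF_zero, Finset.sum_singleton]
  simp [forestWeight]

lemma QM_zero : QM ε 0 = 1 := by
  ext i j
  rw [QM, Matrix.of_apply]
  by_cases hij : i = j
  · subst hij
    have : QS ε 0 i i = {∅} := by
      ext F
      rw [mem_QS, Finset.mem_singleton]
      constructor
      · rintro ⟨_, hc, _, _⟩
        exact Finset.card_eq_zero.mp hc
      · rintro rfl
        exact ⟨empty_isOutForest, Finset.card_empty, fun u => Finset.notMem_empty _,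
          Relation.ReflTransGen.refl⟩
    rw [this, Finset.sum_singleton, Matrix.one_apply_eq]
    simp [forestWeight]
  · have : QS ε 0 i j = ∅ := by
      ext F
      rw [mem_QS]
      simp only [Finset.notMem_empty, iff_false]
      rintro ⟨_, hc, _, hr⟩
      rw [Finset.card_eq_zero.mp hc] at hr
      exact hij (rch_empty hr).symm
    rw [this, Finset.sum_empty, Matrix.one_apply_ne hij]

/-- The Chebotarev–Agaev recurrence in matrix form. -/
theorem CA_matrix (hnonneg : ∀ a b, 0 ≤ ε a b) (k : ℕ) :
    QM ε (k + 1) = sigmaF ε (k + 1) • (1 : Matrix (Fin n) (Fin n) ℝ)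
      - kirchhoff ε * QM ε k := by
  ext i j
  rw [Matrix.sub_apply, Matrix.smul_apply, Matrix.mul_apply, QM, QM, Matrix.of_apply,
    smul_eq_mul]
  have hKQ : ∑ l, kirchhoff ε i l * (Matrix.of fun i j => ∑ F ∈ QS ε k i j, forestWeight ε F) l j
      = -∑ l ∈ univ.erase i, ε l i *
          ((∑ F ∈ QS ε k l j, forestWeight ε F) - (∑ F ∈ QS ε k i j, forestWeight ε F)) := by
    rw [← Finset.sum_erase_add univ _ (Finset.mem_univ i)]
    have hdiag : kirchhoff ε i i = ∑ t ∈ univ.erase i, ε t i := by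
      rw [kirchhoff, Matrix.of_apply, if_pos rfl, Finset.filter_ne']
    have hoff : ∀ l ∈ univ.erase i, kirchhoff ε i l
        * (Matrix.of fun i j => ∑ F ∈ QS ε k i j, forestWeight ε F) l j
        = -(ε l i * (∑ F ∈ QS ε k l j, forestWeight ε F)) := by
      intro l hl
      have hne : i ≠ l := fun h => (Finset.mem_erase.mp hl).1 h.symm
      rw [kirchhoff, Matrix.of_apply, if_neg hne, Matrix.of_apply]
      ring
    rw [Finset.sum_congr rfl hoff, hdiag, Matrix.of_apply]
    rw [Finset.sum_neg_distrib]
    have hID : ∑ l ∈ univ.erase i, ε l i *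
        ((∑ F ∈ QS ε k l j, forestWeight ε F) - (∑ F ∈ QS ε k i j, forestWeight ε F))
        = (∑ l ∈ univ.erase i, ε l i * (∑ F ∈ QS ε k l j, forestWeight ε F))
          - (∑ l ∈ univ.erase i, ε l i) * (∑ F ∈ QS ε k i j, forestWeight ε F) := by
      rw [Finset.sum_mul, ← Finset.sum_sub_distrib]
      exact Finset.sum_congr rfl (fun l _ => by ring)
    rw [hID]
    ring
  rw [hKQ]
  rw [CA_entry hnonneg k i j]
  by_cases hij : i = j
  · subst hij
    rw [if_pos rfl, Matrix.one_apply_eq, sigmaF]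
    ring
  · rw [if_neg hij, Matrix.one_apply_ne hij, sigmaF]
    ring

end AgaevChebotarev
namespace AgaevChebotarev

open Finset Matrix

variable {n : ℕ} {ε : Fin n → Fin n → ℝ}

open scoped Classical

lemma maxForestCard_spec :
    ∃ F : Finset (Fin n × Fin n), IsOutForest ε F ∧ F.card = maxForestCard ε := by
  have hne : Set.Nonempty {k | ∃ F : Finset (Fin n × Fin n), IsOutForest ε F ∧ F.card = k} :=
    ⟨0, ∅, empty_isOutForest, Finset.card_empty⟩
  exact Nat.sSup_mem hne bddAbove_cards

lemma card_le_max {F : Finset (Fin n × Fin n)} (hf : IsOutForest ε F) :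
    F.card ≤ maxForestCard ε :=
  le_csSup bddAbove_cards ⟨F, hf, rfl⟩

lemma FF_max_succ : FF ε (maxForestCard ε + 1) = ∅ := by
  ext F
  rw [mem_FF]
  simp only [Finset.notMem_empty, iff_false]
  rintro ⟨hf, hc⟩
  have := card_le_max hf
  omega

lemma QS_max_succ (i j : Fin n) : QS ε (maxForestCard ε + 1) i j = ∅ := by
  ext F
  rw [mem_QS]
  simp only [Finset.notMem_empty, iff_false]
  rintro ⟨hf, hc, _, _⟩
  have := card_le_max hf
  omega

lemma sigmaF_max_pos : 0 < sigmaF ε (maxForestCard ε) := by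
  obtain ⟨F, hf, hc⟩ := maxForestCard_spec (ε := ε)
  refine Finset.sum_pos (fun G hG => w_pos (mem_FF.mp hG).1) ⟨F, mem_FF.mpr ⟨hf, hc⟩⟩

lemma sigmaF_max_succ : sigmaF ε (maxForestCard ε + 1) = 0 := by
  rw [sigmaF, FF_max_succ, Finset.sum_empty]

lemma QM_max_succ : QM ε (maxForestCard ε + 1) = 0 := by
  ext i j
  rw [QM, Matrix.of_apply, QS_max_succ, Finset.sum_empty, Matrix.zero_apply]

lemma commute_KQ (hnonneg : ∀ a b, 0 ≤ ε a b) (k : ℕ) :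
    kirchhoff ε * QM ε k = QM ε k * kirchhoff ε := by
  induction k with
  | zero => rw [QM_zero, Matrix.one_mul, Matrix.mul_one]
  | succ k ih =>
      rw [CA_matrix hnonneg k, Matrix.mul_sub, Matrix.sub_mul, Matrix.mul_smul,
        Matrix.smul_mul, Matrix.mul_one, Matrix.one_mul, Matrix.mul_assoc, ← ih,
        ← Matrix.mul_assoc]

lemma K_mul_QM_max (hnonneg : ∀ a b, 0 ≤ ε a b) :
    kirchhoff ε * QM ε (maxForestCard ε) = 0 := by
  have h := CA_matrix hnonneg (maxForestCard ε)
  rw [QM_max_succ, sigmaF_max_succ, zero_smul, zero_sub, eq_comm, neg_eq_zero] at h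
  exact h

lemma QM_mul_K_max (hnonneg : ∀ a b, 0 ≤ ε a b) :
    QM ε (maxForestCard ε) * kirchhoff ε = 0 := by
  rw [← commute_KQ hnonneg]
  exact K_mul_QM_max hnonneg

lemma QM_fix (hnonneg : ∀ a b, 0 ≤ ε a b) (k : ℕ) {x : Fin n → ℝ}
    (hx : (kirchhoff ε).mulVec x = 0) :
    (QM ε k).mulVec x = sigmaF ε k • x := by
  induction k with
  | zero => rw [QM_zero, Matrix.one_mulVec, sigmaF_zero, one_smul]
  | succ k ih =>
      rw [CA_matrix hnonneg k, Matrix.sub_mulVec, Matrix.smul_mulVec,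
        Matrix.one_mulVec, ← Matrix.mulVec_mulVec, ih, Matrix.mulVec_smul, hx, smul_zero,
        sub_zero]

/-- Conversion: `sigmaW` agrees with the finset sum. -/
lemma sigmaW_eq_sigmaF : sigmaW ε (maxForestCard ε) = sigmaF ε (maxForestCard ε) := by
  rw [sigmaW, sigmaF, ← finsum_mem_coe_finset]
  congr 1
  ext F
  simp [FF, mem_FF]

lemma QMat_eq_QM : QMat ε (maxForestCard ε) = QM ε (maxForestCard ε) := by
  ext i j
  rw [QMat, QM, Matrix.of_apply, Matrix.of_apply, ← finsum_mem_coe_finset]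
  congr 1
  ext F
  simp only [QS, Finset.coe_filter, Finset.mem_univ, true_and, Set.mem_setOf_eq]
  rfl

theorem main_isUnit (hnonneg : ∀ a b, 0 ≤ ε a b) :
    IsUnit (kirchhoff ε + (Jbar ε)ᵀ) := by
  rw [Matrix.isUnit_iff_isUnit_det, isUnit_iff_ne_zero]
  intro hdet
  obtain ⟨v, hv0, hZv⟩ := (Matrix.exists_mulVec_eq_zero_iff).mpr hdet
  set m := maxForestCard ε
  set σ := sigmaF ε m with hσdef
  have hσ : 0 < σ := sigmaF_max_pos
  have hJ : Jbar ε = σ⁻¹ • QM ε m := by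
    rw [Jbar, sigmaW_eq_sigmaF, QMat_eq_QM]
  have hJK : Jbar ε * kirchhoff ε = 0 := by
    rw [hJ, Matrix.smul_mul, QM_mul_K_max hnonneg, smul_zero]
  rw [Matrix.add_mulVec] at hZv
  set w := (Jbar ε)ᵀ.mulVec v with hwdef
  -- Step 1: w = 0
  have h1 : (Jbar ε).mulVec w = 0 := by
    have := congrArg (fun y => (Jbar ε).mulVec y) hZv
    simp only [Matrix.mulVec_add, Matrix.mulVec_zero] at this
    rw [Matrix.mulVec_mulVec, hJK, Matrix.zero_mulVec] at this
    simpa using this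
  have hw0 : w = 0 := by
    have hdot : v ⬝ᵥ (Jbar ε).mulVec w = 0 := by rw [h1, dotProduct_zero]
    rw [Matrix.dotProduct_mulVec, ← Matrix.mulVec_transpose] at hdot
    exact dotProduct_self_eq_zero.mp hdot
  have hKv : (kirchhoff ε).mulVec v = 0 := by
    rw [hw0, add_zero] at hZv
    exact hZv
  -- Step 2: Jbar v = v
  have h2 : (Jbar ε).mulVec v = v := by
    rw [hJ, Matrix.smul_mulVec, QM_fix hnonneg m hKv, smul_smul,
      inv_mul_cancel₀ (ne_of_gt hσ), one_smul]
  have : v ⬝ᵥ v = 0 := by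
    have hdot : v ⬝ᵥ (Jbar ε).mulVec v = v ⬝ᵥ v := by rw [h2]
    rw [Matrix.dotProduct_mulVec, ← Matrix.mulVec_transpose, ← hwdef, hw0,
      zero_dotProduct] at hdot
    exact hdot.symm
  exact hv0 (dotProduct_self_eq_zero.mp this)

end AgaevChebotarev

/-- the matrix `Z = L + J̄ᵀ` is nonsingular. -/
theorem kirchhoff_add_Jbar_transpose_isUnit (n : ℕ) (hn : 1 < n)
    (ε : Fin n → Fin n → ℝ)
    (hnonneg : ∀ i j, 0 ≤ ε i j) (hdiag : ∀ i, ε i i = 0) :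
    IsUnit (kirchhoff ε + (Jbar ε)ᵀ) := by
  exact AgaevChebotarev.main_isUnit hnonneg
end
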